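/- arXiv:2504.09357 — 9 statements merged into one kernel-verified Lean document; each statement's English description precedes it below -/
import Mathlib

section
/- Let μ1 be the match produced by the student-proposing Deferred Acceptance algorithm (run with the within-group priorities ≻*_s as the schools' choice criteria) and let μ2 be the match produced by running the restricted Top Trading Cycles stage starting from μ1. Then μ2 is in the unified core: no coalition of students between-group blocks μ2 and no coalition of students within-group blocks μ2. -/
/-- A school choice problem.  Students `I` and schools `S` are finite types.
A match sends each student to `some s` (a school) or `none` (unmatched, i.e.
matched to herself).  Strict preferences/priorities are encoded by injective
numerical rank functions (higher value = more preferred / higher priority);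
the weak between-group priority is encoded by an arbitrary rank function,
whose level sets are the priority groups. -/
structure SchoolChoice (I S : Type*) [Fintype I] [Fintype S] where
  /-- the capacity of each school -/
  q : S → ℕ
  /-- each school has at least one seat -/
  q_pos : ∀ s, 1 ≤ q s
  /-- student `i`'s strict preference over `S ∪ {i}` (`none` = being unmatched) -/
  pref : I → Option S → ℕ
  pref_inj : ∀ i, Function.Injective (pref i)
  /-- the between-group priority of school `s` (a weak order on students) -/
  btw : S → I → ℕ
  /-- the within-group priority of school `s` (a strict total order on students) -/
  wthn : S → I → ℕ
  wthn_inj : ∀ s, Function.Injective (wthn s)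
  /-- the within-group priority refines the between-group priority -/
  refines : ∀ s i j, btw s i < btw s j → wthn s i < wthn s j

namespace SchoolChoice

variable {I S : Type*} [Fintype I] [Fintype S] (P : SchoolChoice I S)

/-- `μ` is a match: no school is assigned more students than its capacity. -/
def IsMatch (μ : I → Option S) : Prop :=
  ∀ s : S, {i | μ i = some s}.ncard ≤ P.q s

/-- `μ` is individually rational: every student weakly prefers her assignment
to being unmatched. -/
def IndRational (μ : I → Option S) : Prop :=
  ∀ i, P.pref i none ≤ P.pref i (μ i)

/-- Coalition `A` prefers `ν` to `μ`: all members weakly, some member strictly. -/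
def Prefers (A : Set I) (ν μ : I → Option S) : Prop :=
  (∀ i ∈ A, P.pref i (μ i) ≤ P.pref i (ν i)) ∧ ∃ i ∈ A, P.pref i (μ i) < P.pref i (ν i)

/-- The priority group `[i]_s` of student `i` at school `s`. -/
def Group (s : S) (i : I) : Set I := {j | P.btw s j = P.btw s i}

/-- `A` can between-group enforce `ν` over `μ`: every member assigned a school
by `ν` either displaces a student of strictly lower between-group priority or
takes an empty seat (a student can always enforce becoming unmatched). -/
def BtwEnforce (A : Set I) (ν μ : I → Option S) : Prop :=
  ∀ i ∈ A, ∀ s, ν i = some s →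
    (∃ j, μ j = some s ∧ P.btw s j < P.btw s i) ∨ {j | μ j = some s}.ncard < P.q s

/-- `A` between-group blocks `μ`. -/
def BtwBlocks (A : Set I) (μ : I → Option S) : Prop :=
  ∃ ν, P.IsMatch ν ∧ P.BtwEnforce A ν μ ∧ P.Prefers A ν μ

/-- The responsive set extension `A ≿_s B` of the between-group priority:
`B` is no larger than `A`, and the students of `B` can be paired injectively
with students of `A` of weakly higher between-group priority. -/
def SetGE (s : S) (A B : Set I) : Prop :=
  B.ncard ≤ A.ncard ∧
    ∃ g : I → I, Set.InjOn g B ∧ Set.MapsTo g B A ∧ ∀ b ∈ B, P.btw s b ≤ P.btw s (g b)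

/-- Set indifference `A ∼_s B` under the responsive extension. -/
def SetSim (s : S) (A B : Set I) : Prop := P.SetGE s A B ∧ P.SetGE s B A

/-- The within-group upper contour set `U_s(i)`: the students in `i`'s priority
group at `s` with weakly higher within-group priority. -/
def UCS (s : S) (i : I) : Set I :=
  {j | P.btw s j = P.btw s i ∧ P.wthn s i ≤ P.wthn s j}

/-- The pairs `(i, j)` where `i ∈ A` is sent to `s` by `ν` and `j` is a
within-group interrupter of `i` (i.e. `j ∈ U_s(i) \ A`).  Its cardinality is
the total number of within-group interrupters across all members of `A`
matched to `s` by `ν`. -/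
def InterruptPairs (A : Set I) (ν : I → Option S) (s : S) : Set (I × I) :=
  {p | p.1 ∈ A ∧ ν p.1 = some s ∧ p.2 ∈ P.UCS s p.1 ∧ p.2 ∉ A}

/-- `A` can within-group enforce `ν` over `μ`: for every school in `ν(A)`,
(1) `ν⁻¹(s) ∼_s μ⁻¹(s)` and (2) the total number of within-group interrupters
is at most `q s - |ν⁻¹(s)|`. -/
def WthnEnforce (A : Set I) (ν μ : I → Option S) : Prop :=
  ∀ s : S, (∃ i ∈ A, ν i = some s) →
    P.SetSim s {j | ν j = some s} {j | μ j = some s} ∧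
    (P.InterruptPairs A ν s).ncard ≤ P.q s - {j | ν j = some s}.ncard

/-- `A` within-group blocks `μ`. -/
def WthnBlocks (A : Set I) (μ : I → Option S) : Prop :=
  ∃ ν, P.IsMatch ν ∧ P.WthnEnforce A ν μ ∧ P.Prefers A ν μ

/-- The unified core: no coalition between-group blocks nor within-group
blocks the match. -/
def UnifiedCore (μ : I → Option S) : Prop :=
  (∀ A : Set I, ¬ P.BtwBlocks A μ) ∧ ∀ A : Set I, ¬ P.WthnBlocks A μ

/-- A match is fair (w.r.t. the within-group priorities, à la Gale–Shapley):
no student prefers a school that has an empty seat or admits a student of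
strictly lower within-group priority. -/
def Fair (μ : I → Option S) : Prop :=
  ¬ ∃ (i : I) (s : S), P.pref i (μ i) < P.pref i (some s) ∧
    ((∃ j, μ j = some s ∧ P.wthn s j < P.wthn s i) ∨ {j | μ j = some s}.ncard < P.q s)

/-! ### The student-proposing Deferred Acceptance algorithm,
specified relationally.  The state is the map `R` sending each student to the
set of schools that have rejected her so far. -/

/-- Given rejections `R`, student `i` currently proposes to `o`: `o` is not a
school that rejected `i`, and `o` is her most-preferred such option in
`S ∪ {i}`. -/
def ProposesTo (R : I → Set S) (i : I) (o : Option S) : Prop :=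
  (∀ s, o = some s → s ∉ R i) ∧
  ∀ o' : Option S, (∀ s, o' = some s → s ∉ R i) → P.pref i o' ≤ P.pref i o

/-- Given rejections `R`, school `s` now rejects `i`: `i` proposes to `s` and
at least `q s` current proposers have strictly higher within-group priority. -/
def Rejects (R : I → Set S) (s : S) (i : I) : Prop :=
  P.ProposesTo R i (some s) ∧
  P.q s ≤ {j | P.ProposesTo R j (some s) ∧ P.wthn s i < P.wthn s j}.ncard

/-- One round of Deferred Acceptance: some school is over-demanded, and every
over-demanded school rejects all but its `≻*`-top `q s` proposers. -/
def DAStep (R R' : I → Set S) : Prop :=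
  (∃ s, P.q s < {i | P.ProposesTo R i (some s)}.ncard) ∧
  ∀ i, R' i = R i ∪ {s | P.Rejects R s i}

/-- Deferred Acceptance terminates: no school is over-demanded. -/
def DATerminal (R : I → Set S) : Prop :=
  ∀ s, {i | P.ProposesTo R i (some s)}.ncard ≤ P.q s

/-- `μ1` is the outcome of the student-proposing Deferred Acceptance
algorithm: starting from no rejections, rounds are iterated until no school is
over-demanded, and every student is matched to the agent she last proposed to. -/
def IsDAOutcome (μ1 : I → Option S) : Prop :=
  ∃ (n : ℕ) (R : ℕ → I → Set S),
    (∀ i, R 0 i = ∅) ∧ (∀ k < n, P.DAStep (R k) (R (k + 1))) ∧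
    P.DATerminal (R n) ∧ ∀ i, P.ProposesTo (R n) i (μ1 i)

/-! ### The restricted Top Trading Cycles stage, starting from a match `μ1`,
specified relationally.  The state is the pair of the set of active students
and the current assignment. -/

/-- Student `i` is initially active in the TTC stage: she is matched by `μ1`
to a school at which she lies in the lowest priority group among the students
matched there. -/
def InitActive (μ1 : I → Option S) (i : I) : Prop :=
  ∃ s, μ1 i = some s ∧ ∀ j, μ1 j = some s → P.btw s i ≤ P.btw s j

/-- School `s` is admissible to student `i` (given active students `Act`):
some active student assigned to `s` by `μ1` is in the same priority group as
`i` at `s`.  (In particular `s` is then an active school.) -/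
def Admissible (μ1 : I → Option S) (Act : Set I) (i : I) (s : S) : Prop :=
  ∃ j ∈ Act, μ1 j = some s ∧ P.btw s i = P.btw s j

/-- Active student `i` points to school `s`: `s` is her most-preferred
admissible active school. -/
def StuPoints (μ1 : I → Option S) (Act : Set I) (i : I) (s : S) : Prop :=
  i ∈ Act ∧ P.Admissible μ1 Act i s ∧
  ∀ s', P.Admissible μ1 Act i s' → P.pref i (some s') ≤ P.pref i (some s)

/-- Active school `s` points to student `i`: `i` is the `≻*_s`-highest active
student in `μ1⁻¹(s)`. -/
def SchPoints (μ1 : I → Option S) (Act : Set I) (s : S) (i : I) : Prop :=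
  i ∈ Act ∧ μ1 i = some s ∧ ∀ j ∈ Act, μ1 j = some s → P.wthn s j ≤ P.wthn s i

/-- A (pointing) cycle `i₁, s₁, …, iₙ, sₙ` of distinct active students and
active schools: each student `c k` points to school `d k`, and each school
`d k` points to the cyclically next student `c (k+1)`. -/
def IsCycle (μ1 : I → Option S) (Act : Set I) {n : ℕ}
    (c : Fin (n + 1) → I) (d : Fin (n + 1) → S) : Prop :=
  Function.Injective c ∧ Function.Injective d ∧
  (∀ k, P.StuPoints μ1 Act (c k) (d k)) ∧
  ∀ k, P.SchPoints μ1 Act (d k) (c (k + 1))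

/-- One round of the restricted TTC stage: a cycle forms, each student on the
cycle is assigned the school she points to and is deactivated; all other
assignments are unchanged. -/
def TTCStep (μ1 : I → Option S) (st st' : Set I × (I → Option S)) : Prop :=
  ∃ (n : ℕ) (c : Fin (n + 1) → I) (d : Fin (n + 1) → S),
    P.IsCycle μ1 st.1 c d ∧
    st'.1 = st.1 \ Set.range c ∧
    (∀ k, st'.2 (c k) = some (d k)) ∧
    ∀ i, i ∉ Set.range c → st'.2 i = st.2 i

/-- `μ2` is the outcome of the restricted Top Trading Cycles stage starting
from `μ1`: beginning with the initially active students and assignment `μ1`,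
rounds are iterated until no student is active. -/
def IsTTCOutcome (μ1 μ2 : I → Option S) : Prop :=
  ∃ (m : ℕ) (st : ℕ → Set I × (I → Option S)),
    st 0 = ({i | P.InitActive μ1 i}, μ1) ∧
    (∀ k < m, P.TTCStep μ1 (st k) (st (k + 1))) ∧
    (st m).1 = ∅ ∧ μ2 = (st m).2

end SchoolChoice

/-!
DA makes `μ1` fair: a student who envies a school ranks, within-group, below all its occupants,
and the school is full. TTC then only trades seats inside the lowest priority group of each
school, so `μ2` is a group-preserving permutation of `μ1` that weakly improves every student.
Hence a between-group block would need a seat at a full school whose occupants all rank above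
the blocker.

In a within-group block of `A` via `ν`, full schools leave no room for interrupters, so `A`
contains the whole `μ1`-group of every school that a member envies and obtains. A member moved
by `ν` leaves TTC only after her target group has emptied (else she would have pointed there),
so pick the gaining member `y → s` whose group at `s` empties first. As `ν` preserves the
group sizes at `s`, some `x` of that group holds `s` in `μ2` but not in `ν`, and she obtained
it in a cycle before the group emptied. Going round that cycle, every student lies in `A`; so
`x ∈ A` is moved by `ν` although she left TTC too early for that.
-/

theorem Fin.forall_of_add_one_closed {n : ℕ} {p : Fin (n + 1) → Prop} {j : Fin (n + 1)}
    (hj : p j) (h : ∀ k, p k → p (k + 1)) (k : Fin (n + 1)) : p k := by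
  have key : ∀ m, p (j + m) :=
    Fin.induction (by simpa using hj) fun i hi => by
      simpa [← Fin.coeSucc_eq_succ, ← add_assoc] using h _ hi
  simpa using key (k - j)

theorem Finset.sum_comp_le_of_injOn {α : Type*} [DecidableEq α] (f : α → ℕ) {X Y : Finset α}
    {g : α → α} (hg : Set.InjOn g X) (hXY : Set.MapsTo g X Y) :
    ∑ x ∈ X, f (g x) ≤ ∑ y ∈ Y, f y := by
  rw [← Finset.sum_image hg]
  exact Finset.sum_le_sum_of_subset (Finset.image_subset_iff.2 hXY)

theorem Set.apply_eq_of_injOn_le {α : Type*} {f : α → ℕ} {X Y : Set α} (hX : X.Finite)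
    (hY : Y.Finite) {g g' : α → α} (hg : Set.InjOn g X) (hXY : Set.MapsTo g X Y)
    (hgf : ∀ x ∈ X, f x ≤ f (g x)) (hg' : Set.InjOn g' Y) (hYX : Set.MapsTo g' Y X)
    (hg'f : ∀ y ∈ Y, f y ≤ f (g' y)) : ∀ x ∈ X, f x = f (g x) := by
  classical
  lift X to Finset α using hX
  lift Y to Finset α using hY
  refine (Finset.sum_eq_sum_iff_of_le hgf).1 (le_antisymm (Finset.sum_le_sum hgf) ?_)
  calc ∑ x ∈ X, f (g x) ≤ ∑ y ∈ Y, f y := Finset.sum_comp_le_of_injOn f hg hXY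
    _ ≤ ∑ y ∈ Y, f (g' y) := Finset.sum_le_sum hg'f
    _ ≤ ∑ x ∈ X, f x := Finset.sum_comp_le_of_injOn f hg' hYX

namespace SchoolChoice

variable {I S : Type*} [Fintype I] [Fintype S] {P : SchoolChoice I S}

theorem ProposesTo.unique {R : I → Set S} {i : I} {o o' : Option S}
    (h : P.ProposesTo R i o) (h' : P.ProposesTo R i o') : o = o' :=
  P.pref_inj i (le_antisymm (h'.2 o h.1) (h.2 o' h'.1))

theorem ProposesTo.of_not_rejects {R R' : I → Set S} (hstep : P.DAStep R R') {i : I} {s : S}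
    (h : P.ProposesTo R i (some s)) (hnr : ¬ P.Rejects R s i) : P.ProposesTo R' i (some s) := by
  refine ⟨?_, fun o ho => h.2 o fun t ht hR => ho t ht ?_⟩
  · rintro t ⟨⟩
    rw [hstep.2 i]
    rintro (hR | hR)
    exacts [h.1 s rfl hR, hnr hR]
  · rw [hstep.2 i]; exact Or.inl hR

/-- If some of these proposers are rejected, the best rejected one still has `q s` proposers
above her, none of whom is rejected. -/
theorem DAStep.le_ncard_proposers_above {R R' : I → Set S} (hstep : P.DAStep R R') {s : S}
    {w : ℕ} (h : P.q s ≤ {j | P.ProposesTo R j (some s) ∧ w < P.wthn s j}.ncard) :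
    P.q s ≤ {j | P.ProposesTo R' j (some s) ∧ w < P.wthn s j}.ncard := by
  set V := {j | P.ProposesTo R j (some s) ∧ w < P.wthn s j}
  have hkept : ∀ j ∈ V, ¬ P.Rejects R s j → P.ProposesTo R' j (some s) ∧ w < P.wthn s j :=
    fun j hj hnr => ⟨hj.1.of_not_rejects hstep hnr, hj.2⟩
  by_cases hrej : ∃ j ∈ V, P.Rejects R s j
  · obtain ⟨j, ⟨hjV, hjR⟩, hmax⟩ := Set.exists_max_image {j | j ∈ V ∧ P.Rejects R s j}
      (P.wthn s) (Set.toFinite _) hrej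
    refine hjR.2.trans (Set.ncard_le_ncard fun k ⟨hk, hjk⟩ => ?_)
    refine hkept k ⟨hk, hjV.2.trans hjk⟩ fun hkR => ?_
    exact (hmax k ⟨⟨hk, hjV.2.trans hjk⟩, hkR⟩).not_gt hjk
  · push Not at hrej
    exact h.trans (Set.ncard_le_ncard fun j hj => hkept j hj (hrej j hj))

theorem le_ncard_proposers_above_of_mem_rejected {n : ℕ} {R : ℕ → I → Set S}
    (hR0 : ∀ i, R 0 i = ∅) (hstep : ∀ k < n, P.DAStep (R k) (R (k + 1))) :
    ∀ k ≤ n, ∀ {i s}, s ∈ R k i →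
      P.q s ≤ {j | P.ProposesTo (R k) j (some s) ∧ P.wthn s i < P.wthn s j}.ncard := by
  intro k
  induction k with
  | zero => intro _ i s hs; simp [hR0 i] at hs
  | succ k ih =>
    intro hk i s hs
    have hstepk := hstep k (by omega)
    refine hstepk.le_ncard_proposers_above ?_
    rw [hstepk.2 i] at hs
    rcases hs with hs | hs
    exacts [ih (by omega) hs, hs.2]

theorem setOf_proposesTo_eq {R : I → Set S} {μ : I → Option S}
    (hprop : ∀ i, P.ProposesTo R i (μ i)) (o : Option S) :
    {j | P.ProposesTo R j o} = {j | μ j = o} :=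
  Set.ext fun j => ⟨fun hj => (hprop j).unique hj, fun hj => hj ▸ hprop j⟩

namespace IsDAOutcome

variable {μ1 : I → Option S}

theorem isMatch (h : P.IsDAOutcome μ1) : P.IsMatch μ1 := by
  obtain ⟨n, R, -, -, hterm, hprop⟩ := h
  intro s
  rw [← setOf_proposesTo_eq hprop]
  exact hterm s

theorem indRational (h : P.IsDAOutcome μ1) : P.IndRational μ1 := by
  obtain ⟨n, R, -, -, -, hprop⟩ := h
  exact fun i => (hprop i).2 none (by simp)

theorem fair (h : P.IsDAOutcome μ1) : P.Fair μ1 := by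
  obtain ⟨n, R, hR0, hstep, hterm, hprop⟩ := h
  rintro ⟨i, s, henvy, hjust⟩
  have hrej : s ∈ R n i := by
    by_contra hs
    exact henvy.not_ge ((hprop i).2 (some s) (by rintro t ⟨⟩; exact hs))
  have hproposers := setOf_proposesTo_eq hprop (some s)
  have habove := le_ncard_proposers_above_of_mem_rejected hR0 hstep n le_rfl hrej
  have hall : {j | P.ProposesTo (R n) j (some s) ∧ P.wthn s i < P.wthn s j}
      = {j | P.ProposesTo (R n) j (some s)} :=
    Set.eq_of_subset_of_ncard_le (fun j hj => hj.1) ((hterm s).trans habove)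
  rw [hproposers] at hall
  rcases hjust with ⟨j, hj, hlt⟩ | hvac
  · exact hlt.not_gt (hall.symm.subset hj).2
  · rw [← hall] at hvac
    exact hvac.not_ge habove

end IsDAOutcome

def occupantGroup (P : SchoolChoice I S) (μ : I → Option S) (s : S) (y : I) : Set I :=
  {z | μ z = some s ∧ P.btw s z = P.btw s y}

theorem occupantGroup_eq_of_btw_eq {μ : I → Option S} {s : S} {x y : I}
    (h : P.btw s x = P.btw s y) : P.occupantGroup μ s x = P.occupantGroup μ s y := by
  simp only [occupantGroup, h]

theorem InitActive.btw_eq {μ : I → Option S} {i j : I} {s : S} (hi : P.InitActive μ i)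
    (hj : P.InitActive μ j) (his : μ i = some s) (hjs : μ j = some s) :
    P.btw s i = P.btw s j := by
  obtain ⟨t, hit, hi⟩ := hi
  obtain ⟨u, hju, hj⟩ := hj
  obtain rfl : s = t := Option.some_inj.1 (his.symm.trans hit)
  obtain rfl : s = u := Option.some_inj.1 (hjs.symm.trans hju)
  exact le_antisymm (hi j hjs) (hj i his)

namespace Fair

variable {μ : I → Option S} {i : I} {s : S}

theorem ncard_eq_q_of_pref_lt (hμ : P.IsMatch μ) (hfair : P.Fair μ)
    (henvy : P.pref i (μ i) < P.pref i (some s)) : {j | μ j = some s}.ncard = P.q s :=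
  le_antisymm (hμ s) (not_lt.1 fun hvac => hfair ⟨i, s, henvy, Or.inr hvac⟩)

theorem wthn_lt_of_pref_lt (hfair : P.Fair μ) (henvy : P.pref i (μ i) < P.pref i (some s))
    {j : I} (hj : μ j = some s) : P.wthn s i < P.wthn s j := by
  have hji : j ≠ i := by
    rintro rfl
    rw [hj] at henvy
    exact lt_irrefl _ henvy
  exact lt_of_le_of_ne (not_lt.1 fun hlt => hfair ⟨i, s, henvy, Or.inl ⟨j, hj, hlt⟩⟩)
    fun h => hji (P.wthn_inj s h).symm

/-- Everyone at the envied school ranks above the envious student, so her priority group is the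
lowest one there. -/
theorem occupantGroup_subset_initActive (hfair : P.Fair μ)
    (henvy : P.pref i (μ i) < P.pref i (some s)) :
    P.occupantGroup μ s i ⊆ {z | P.InitActive μ z} := by
  rintro z ⟨hz, hzi⟩
  refine ⟨s, hz, fun j hj => not_lt.1 fun hlt => ?_⟩
  exact (hfair.wthn_lt_of_pref_lt henvy hj).not_gt (P.refines s j i (hzi ▸ hlt))

end Fair

theorem SetSim.ncard_level_eq {s : S} {B C : Set I} (h : P.SetSim s B C) (v : ℕ) :
    {b ∈ B | P.btw s b = v}.ncard = {c ∈ C | P.btw s c = v}.ncard := by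
  obtain ⟨⟨-, g, hg, hgm, hgle⟩, ⟨-, g', hg', hg'm, hg'le⟩⟩ := h
  have hpres := Set.apply_eq_of_injOn_le C.toFinite B.toFinite hg hgm hgle hg' hg'm hg'le
  have hpres' := Set.apply_eq_of_injOn_le B.toFinite C.toFinite hg' hg'm hg'le hg hgm hgle
  apply le_antisymm
  · exact Set.ncard_le_ncard_of_injOn g' (fun b hb => ⟨hg'm hb.1, hpres' b hb.1 ▸ hb.2⟩)
      (hg'.mono fun b hb => hb.1)
  · exact Set.ncard_le_ncard_of_injOn g (fun c hc => ⟨hgm hc.1, hpres c hc.1 ▸ hc.2⟩)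
      (hg.mono fun c hc => hc.1)

theorem SetSim.exists_btw_eq_of_mem_of_notMem {s : S} {B C : Set I} (h : P.SetSim s B C)
    {y : I} (hyB : y ∈ B) (hyC : y ∉ C) : ∃ x ∈ C, x ∉ B ∧ P.btw s x = P.btw s y := by
  by_contra hno
  push Not at hno
  have hsub : {c ∈ C | P.btw s c = P.btw s y} ⊆ {b ∈ B | P.btw s b = P.btw s y} \ {y} :=
    fun x hx => ⟨⟨not_not.1 fun hxB => hno x hx.1 hxB hx.2, hx.2⟩,
      fun hxy => hyC (hxy ▸ hx.1)⟩
  have hlt := Set.ncard_sdiff_singleton_lt_of_mem (s := {b ∈ B | P.btw s b = P.btw s y})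
    ⟨hyB, rfl⟩
  rw [h.ncard_level_eq] at hlt
  exact (Set.ncard_le_ncard hsub).not_gt hlt

theorem SetSim.exists_btw_eq {s : S} {B C : Set I} (h : P.SetSim s B C) {y : I} (hyB : y ∈ B) :
    ∃ x ∈ C, P.btw s x = P.btw s y := by
  by_cases hyC : y ∈ C
  · exact ⟨y, hyC, rfl⟩
  · obtain ⟨x, hx, -, hxy⟩ := h.exists_btw_eq_of_mem_of_notMem hyB hyC
    exact ⟨x, hx, hxy⟩

theorem WthnEnforce.mem_of_btw_eq {A : Set I} {ν μ : I → Option S} (h : P.WthnEnforce A ν μ)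
    {y : I} {s : S} (hy : y ∈ A) (hνy : ν y = some s)
    (hfull : P.q s ≤ {j | ν j = some s}.ncard) {b : I} (hb : P.btw s b = P.btw s y)
    (hwb : P.wthn s y ≤ P.wthn s b) : b ∈ A := by
  by_contra hbA
  have hint := (h s ⟨y, hy, hνy⟩).2
  rw [Nat.sub_eq_zero_of_le hfull, Nat.le_zero, Set.ncard_eq_zero] at hint
  have hpair : (y, b) ∈ P.InterruptPairs A ν s := ⟨hy, hνy, ⟨hb, hwb⟩, hbA⟩
  rw [hint] at hpair
  exact hpair

theorem WthnEnforce.occupantGroup_subset {A : Set I} {ν μ1 μ2 : I → Option S}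
    (h : P.WthnEnforce A ν μ2) (hμ1 : P.IsMatch μ1) (hfair : P.Fair μ1) {y : I} {s : S}
    (hcard : {j | μ2 j = some s}.ncard = {j | μ1 j = some s}.ncard) (hy : y ∈ A)
    (hνy : ν y = some s) (henvy : P.pref y (μ1 y) < P.pref y (some s)) :
    P.occupantGroup μ1 s y ⊆ A := by
  rintro z ⟨hz, hzy⟩
  refine h.mem_of_btw_eq hy hνy ?_ hzy (hfair.wthn_lt_of_pref_lt henvy hz).le
  rw [← hfair.ncard_eq_q_of_pref_lt hμ1 henvy, ← hcard]
  exact (h s ⟨y, hy, hνy⟩).1.1.1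

theorem IsCycle.btw_eq {μ1 : I → Option S} {Act : Set I} {n : ℕ} {c : Fin (n + 1) → I}
    {d : Fin (n + 1) → S} (hcyc : P.IsCycle μ1 Act c d)
    (hAct : ∀ i ∈ Act, P.InitActive μ1 i) (j : Fin (n + 1)) :
    P.btw (d j) (c (j + 1)) = P.btw (d j) (c j) := by
  obtain ⟨z, hz, hzμ, hbtw⟩ := (hcyc.2.2.1 j).2.1
  obtain ⟨hc, hcμ, -⟩ := hcyc.2.2.2 j
  rw [hbtw]
  exact (hAct _ hc).btw_eq (hAct z hz) hcμ hzμ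

theorem IsCycle.forall_mem_of_occupantGroup_subset {μ1 : I → Option S} {Act : Set I} {n : ℕ}
    {c : Fin (n + 1) → I} {d : Fin (n + 1) → S} (hcyc : P.IsCycle μ1 Act c d)
    (hAct : ∀ i ∈ Act, P.InitActive μ1 i) {A : Set I} {j₀ : Fin (n + 1)}
    (hbase : P.occupantGroup μ1 (d j₀) (c j₀) ⊆ A)
    (hstep : ∀ j, c (j + 1) ∈ A → d (j + 1) ≠ d j →
      P.occupantGroup μ1 (d (j + 1)) (c (j + 1)) ⊆ A) (j : Fin (n + 1)) : c j ∈ A := by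
  have hnext : ∀ j, P.occupantGroup μ1 (d j) (c j) ⊆ A → c (j + 1) ∈ A :=
    fun j hj => hj ⟨(hcyc.2.2.2 j).2.1, hcyc.btw_eq hAct j⟩
  have hall : ∀ j, P.occupantGroup μ1 (d j) (c j) ⊆ A :=
    Fin.forall_of_add_one_closed hbase fun j hj => by
      by_cases hd : d (j + 1) = d j
      · rwa [hcyc.2.1 hd]
      · exact hstep j (hnext j hj) hd
  simpa using hnext (j - 1) (hall (j - 1))

variable {μ1 : I → Option S}

theorem TTCStep.exists_perm {st st' : Set I × (I → Option S)} (h : P.TTCStep μ1 st st')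
    (hAct : ∀ i ∈ st.1, P.InitActive μ1 i) (hst : ∀ i ∈ st.1, st.2 i = μ1 i) :
    ∃ σ : Equiv.Perm I, ∀ i, st.2 (σ i) = st'.2 i ∧
      ∀ s, st'.2 i = some s → P.btw s (σ i) = P.btw s i := by
  classical
  obtain ⟨n, c, d, hcyc, -, hass, hkeep⟩ := h
  set σ := (finRotate (n + 1)).extendDomain (Equiv.ofInjective c hcyc.1)
  refine ⟨σ, fun i => ?_⟩
  by_cases hi : i ∈ Set.range c
  · obtain ⟨j, rfl⟩ := hi
    have hσ : σ (c j) = c (j + 1) := by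
      simpa [finRotate_apply] using
        Equiv.Perm.extendDomain_apply_image (finRotate (n + 1)) (Equiv.ofInjective c hcyc.1) j
    rw [hσ, hass j, hst _ (hcyc.2.2.2 j).1, (hcyc.2.2.2 j).2.1]
    refine ⟨rfl, fun s hs => ?_⟩
    obtain rfl := Option.some_inj.1 hs
    exact hcyc.btw_eq hAct j
  · rw [Equiv.Perm.extendDomain_apply_not_subtype _ _ hi, hkeep i hi]
    exact ⟨rfl, fun _ _ => rfl⟩

structure TTCRun (P : SchoolChoice I S) (μ1 : I → Option S) where
  len : ℕ
  state : ℕ → Set I × (I → Option S)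
  state_zero : state 0 = ({i | P.InitActive μ1 i}, μ1)
  step : ∀ k < len, P.TTCStep μ1 (state k) (state (k + 1))
  active_len : (state len).1 = ∅

namespace TTCRun

variable (r : P.TTCRun μ1)

def active (k : ℕ) : Set I := (r.state k).1

def outcome : I → Option S := (r.state r.len).2

theorem active_zero : r.active 0 = {i | P.InitActive μ1 i} := by
  simp [active, r.state_zero]

theorem active_succ_subset {k : ℕ} (hk : k < r.len) : r.active (k + 1) ⊆ r.active k := by
  obtain ⟨n, c, d, -, hact, -⟩ := r.step k hk
  simp only [active, hact, Set.sdiff_subset]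

theorem active_anti {k l : ℕ} (hkl : k ≤ l) (hl : l ≤ r.len) : r.active l ⊆ r.active k := by
  induction l, hkl using Nat.le_induction with
  | base => exact subset_rfl
  | succ l _ ih => exact (r.active_succ_subset (by omega)).trans (ih (by omega))

theorem initActive_of_mem_active {k : ℕ} (hk : k ≤ r.len) {i : I} (hi : i ∈ r.active k) :
    P.InitActive μ1 i := by
  simpa [active_zero] using r.active_anti (Nat.zero_le k) hk hi

theorem state_succ_eq {k : ℕ} (hk : k < r.len) {i : I}
    (hi : i ∈ r.active k → i ∈ r.active (k + 1)) :
    (r.state (k + 1)).2 i = (r.state k).2 i := by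
  obtain ⟨n, c, d, hcyc, hact, -, hkeep⟩ := r.step k hk
  refine hkeep i fun ⟨j, hj⟩ => ?_
  have h := hi (hj ▸ (hcyc.2.2.1 j).1)
  rw [active, hact] at h
  exact h.2 ⟨j, hj⟩

theorem state_eq_of_mem_active {k : ℕ} (hk : k ≤ r.len) {i : I} (hi : i ∈ r.active k) :
    (r.state k).2 i = μ1 i := by
  induction k with
  | zero => simp [r.state_zero]
  | succ k ih =>
    rw [r.state_succ_eq hk fun _ => hi, ih (by omega) (r.active_succ_subset hk hi)]

theorem outcome_eq_of_not_mem_active {k : ℕ} (hk : k ≤ r.len) {i : I} (hi : i ∉ r.active k) :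
    r.outcome i = (r.state k).2 i := by
  suffices ∀ l, k ≤ l → l ≤ r.len → (r.state l).2 i = (r.state k).2 i from
    this _ hk le_rfl
  intro l hkl
  induction l, hkl using Nat.le_induction with
  | base => exact fun _ => rfl
  | succ l hkl ih =>
    intro hl
    rw [r.state_succ_eq hl fun h => absurd (r.active_anti hkl (by omega) h) hi, ih (by omega)]

theorem outcome_eq_of_not_initActive {i : I} (hi : ¬ P.InitActive μ1 i) :
    r.outcome i = μ1 i := by
  rw [r.outcome_eq_of_not_mem_active (Nat.zero_le _) (by simpa [active_zero] using hi)]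
  simp [r.state_zero]

theorem exists_perm_state {k : ℕ} (hk : k ≤ r.len) :
    ∃ σ : Equiv.Perm I, ∀ i, μ1 (σ i) = (r.state k).2 i ∧
      ∀ s, (r.state k).2 i = some s → P.btw s (σ i) = P.btw s i := by
  induction k with
  | zero => exact ⟨1, fun i => by simp [r.state_zero]⟩
  | succ k ih =>
    obtain ⟨σ, hσ⟩ := ih (by omega)
    obtain ⟨τ, hτ⟩ := (r.step k hk).exists_perm
      (fun _ => r.initActive_of_mem_active (by omega))
      (fun _ => r.state_eq_of_mem_active (by omega))
    refine ⟨σ * τ, fun i => ⟨(hσ (τ i)).1.trans (hτ i).1, fun s hs => ?_⟩⟩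
    exact ((hσ (τ i)).2 s ((hτ i).1.trans hs)).trans ((hτ i).2 s hs)

theorem ncard_outcome_eq (s : S) :
    {i | r.outcome i = some s}.ncard = {i | μ1 i = some s}.ncard := by
  obtain ⟨σ, hσ⟩ := r.exists_perm_state le_rfl
  have : {i | r.outcome i = some s} = σ ⁻¹' {i | μ1 i = some s} := by
    ext i
    simp [outcome, (hσ i).1]
  rw [this, Set.ncard_preimage_of_injective_subset_range σ.injective (by simp)]

theorem occupantGroup_nonempty_of_outcome_eq {w : I} {s : S} (hw : r.outcome w = some s) :
    (P.occupantGroup μ1 s w).Nonempty := by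
  obtain ⟨σ, hσ⟩ := r.exists_perm_state le_rfl
  exact ⟨σ w, (hσ w).1.trans hw, (hσ w).2 s hw⟩

theorem exists_notMem_active (i : I) : ∃ k, i ∉ r.active k :=
  ⟨r.len, by simp [active, r.active_len]⟩

open Classical in
/-- The round in which student `i` leaves the TTC stage (junk `0` if she is never active). -/
noncomputable def exit (i : I) : ℕ := Nat.find (r.exists_notMem_active i) - 1

open Classical in
noncomputable def groupExit (s : S) (y : I) : ℕ :=
  (Finset.univ.filter (· ∈ P.occupantGroup μ1 s y)).sup r.exit

variable {r}

theorem exit_spec {i : I} (hi : P.InitActive μ1 i) :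
    r.exit i < r.len ∧ i ∈ r.active (r.exit i) ∧ i ∉ r.active (r.exit i + 1) := by
  classical
  have hfind := Nat.find_spec (r.exists_notMem_active i)
  have hpos : Nat.find (r.exists_notMem_active i) ≠ 0 := by
    intro h
    rw [h, active_zero] at hfind
    exact hfind hi
  have hle : Nat.find (r.exists_notMem_active i) ≤ r.len :=
    Nat.find_min' _ (by simp [active, r.active_len])
  have hprev := Nat.find_min (r.exists_notMem_active i) (Nat.sub_one_lt hpos)
  have hsucc : r.exit i + 1 = Nat.find (r.exists_notMem_active i) := by
    unfold exit
    omega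
  refine ⟨by omega, not_not.1 hprev, hsucc ▸ hfind⟩

theorem mem_active_iff {k : ℕ} (hk : k ≤ r.len) {i : I} :
    i ∈ r.active k ↔ P.InitActive μ1 i ∧ k ≤ r.exit i := by
  refine ⟨fun h => ⟨r.initActive_of_mem_active hk h, not_lt.1 fun hlt => ?_⟩,
    fun ⟨hi, hle⟩ => r.active_anti hle (r.exit_spec hi).1.le (r.exit_spec hi).2.1⟩
  have hi := r.initActive_of_mem_active hk h
  exact (r.exit_spec hi).2.2 (r.active_anti hlt hk h)

theorem exists_exit_cycle {i : I} (hi : P.InitActive μ1 i) :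
    ∃ (n : ℕ) (c : Fin (n + 1) → I) (d : Fin (n + 1) → S),
      P.IsCycle μ1 (r.active (r.exit i)) c d ∧ i ∈ Set.range c ∧
      ∀ j, r.outcome (c j) = some (d j) ∧ r.exit (c j) = r.exit i := by
  obtain ⟨hlt, hmem, hnmem⟩ := r.exit_spec hi
  obtain ⟨n, c, d, hcyc, hact, hass, -⟩ := r.step _ hlt
  have hleave : ∀ j, c j ∉ r.active (r.exit i + 1) := fun j h => by
    rw [active, hact] at h
    exact h.2 ⟨j, rfl⟩
  refine ⟨n, c, d, hcyc, not_not.1 fun h => hnmem ?_, fun j => ⟨?_, ?_⟩⟩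
  · rw [active, hact]
    exact ⟨hmem, h⟩
  · rw [r.outcome_eq_of_not_mem_active hlt (hleave j), hass j]
  · have hstay := (r.mem_active_iff hlt.le).1 (hcyc.2.2.1 j).1
    have hgone := mt (r.mem_active_iff hlt).2 (hleave j)
    push Not at hgone
    exact le_antisymm (Nat.lt_succ_iff.1 (hgone hstay.1)) hstay.2

theorem stuPoints_outcome {i : I} (hi : P.InitActive μ1 i) :
    ∃ s, r.outcome i = some s ∧ P.StuPoints μ1 (r.active (r.exit i)) i s := by
  obtain ⟨n, c, d, hcyc, ⟨j, rfl⟩, hcd⟩ := r.exists_exit_cycle hi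
  exact ⟨d j, (hcd j).1, hcyc.2.2.1 j⟩

theorem pref_le_outcome (i : I) : P.pref i (μ1 i) ≤ P.pref i (r.outcome i) := by
  by_cases hi : P.InitActive μ1 i
  · obtain ⟨s, hs, -, -, hbest⟩ := r.stuPoints_outcome hi
    have hmem := (r.exit_spec hi).2.1
    obtain ⟨t, ht, -⟩ := hi
    rw [hs, ht]
    exact hbest t ⟨i, hmem, ht, rfl⟩
  · rw [r.outcome_eq_of_not_initActive hi]

theorem exit_le_groupExit {s : S} {y z : I} (hz : z ∈ P.occupantGroup μ1 s y) :
    r.exit z ≤ r.groupExit s y := by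
  classical
  exact Finset.le_sup (f := r.exit) (by simpa using hz)

/-- A student leaves TTC with `s` only while `s` is admissible to her. -/
theorem exit_le_groupExit_of_outcome_eq {x y : I} {s : S} (hx : P.InitActive μ1 x)
    (hs : r.outcome x = some s) (hxy : P.btw s x = P.btw s y) :
    r.exit x ≤ r.groupExit s y := by
  obtain ⟨t, ht, -, ⟨z, hz, hzt, hbtw⟩, -⟩ := r.stuPoints_outcome hx
  obtain rfl : s = t := Option.some_inj.1 (hs.symm.trans ht)
  exact ((r.mem_active_iff (r.exit_spec hx).1.le).1 hz).2.trans
    (r.exit_le_groupExit ⟨hzt, hbtw.symm.trans hxy⟩)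

/-- Otherwise `s` would still be admissible to `x` when she leaves. -/
theorem exit_lt_exit_of_pref_lt {x z : I} {s : S} (hx : P.InitActive μ1 x)
    (hz : P.InitActive μ1 z) (hzs : μ1 z = some s) (hbtw : P.btw s z = P.btw s x)
    (hpref : P.pref x (r.outcome x) < P.pref x (some s)) : r.exit z < r.exit x := by
  obtain ⟨t, ht, -, -, hbest⟩ := r.stuPoints_outcome hx
  refine not_le.1 fun hle => ?_
  have hzact := (r.mem_active_iff (r.exit_spec hx).1.le).2 ⟨hz, hle⟩
  rw [ht] at hpref
  exact hpref.not_ge (hbest s ⟨z, hzact, hzs, hbtw.symm⟩)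

theorem groupExit_lt_exit {x : I} {s : S} (hx : P.InitActive μ1 x)
    (hne : (P.occupantGroup μ1 s x).Nonempty)
    (hact : P.occupantGroup μ1 s x ⊆ {z | P.InitActive μ1 z})
    (hpref : P.pref x (r.outcome x) < P.pref x (some s)) : r.groupExit s x < r.exit x := by
  classical
  obtain ⟨z, hz, hsup⟩ := Finset.exists_mem_eq_sup
    (Finset.univ.filter (· ∈ P.occupantGroup μ1 s x))
    (Finset.filter_nonempty_iff.2 (hne.imp fun _ hz => ⟨Finset.mem_univ _, hz⟩)) r.exit
  rw [Finset.mem_filter] at hz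
  rw [groupExit, hsup]
  exact r.exit_lt_exit_of_pref_lt hx (hact hz.2) hz.2.1 hz.2.2 hpref

theorem exists_eq_some_of_pref_lt (hIR : P.IndRational μ1) {i : I} {o : Option S}
    (h : P.pref i (r.outcome i) < P.pref i o) : ∃ s, o = some s := by
  cases o with
  | none => exact absurd ((hIR i).trans (r.pref_le_outcome i)) h.not_ge
  | some s => exact ⟨s, rfl⟩

theorem not_btwBlocks (hμ1 : P.IsMatch μ1) (hfair : P.Fair μ1) (hIR : P.IndRational μ1)
    (A : Set I) : ¬ P.BtwBlocks A r.outcome := by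
  rintro ⟨ν, -, hBE, -, i, hiA, hlt⟩
  obtain ⟨s, hνi⟩ := r.exists_eq_some_of_pref_lt hIR hlt
  rw [hνi] at hlt
  have henvy := (r.pref_le_outcome i).trans_lt hlt
  rcases hBE i hiA s hνi with ⟨j, hj, hji⟩ | hvac
  · obtain ⟨z, hz, hzj⟩ := r.occupantGroup_nonempty_of_outcome_eq hj
    exact (hfair.wthn_lt_of_pref_lt henvy hz).not_gt (P.refines s z i (hzj ▸ hji))
  · rw [r.ncard_outcome_eq, hfair.ncard_eq_q_of_pref_lt hμ1 henvy] at hvac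
    exact lt_irrefl _ hvac

section Blocking

variable {A : Set I} {ν : I → Option S}

theorem occupantGroup_nonempty (hWE : P.WthnEnforce A ν r.outcome) {y : I} {s : S}
    (hy : y ∈ A) (hνy : ν y = some s) : (P.occupantGroup μ1 s y).Nonempty := by
  obtain ⟨x, hx, hxy⟩ := (hWE s ⟨y, hy, hνy⟩).1.exists_btw_eq hνy
  rw [← occupantGroup_eq_of_btw_eq hxy]
  exact r.occupantGroup_nonempty_of_outcome_eq hx

/-- The witness is the strict improver `y → s` minimising `groupExit s y`. -/
theorem exists_improver_groupExit_lt (hfair : P.Fair μ1) (hIR : P.IndRational μ1)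
    (hWE : P.WthnEnforce A ν r.outcome)
    (hweak : ∀ i ∈ A, P.pref i (r.outcome i) ≤ P.pref i (ν i))
    (hstrict : ∃ i ∈ A, P.pref i (r.outcome i) < P.pref i (ν i)) :
    ∃ y s, y ∈ A ∧ ν y = some s ∧ P.pref y (r.outcome y) < P.pref y (some s) ∧
      ∀ x ∈ A, ν x ≠ r.outcome x → P.InitActive μ1 x → r.groupExit s y < r.exit x := by
  obtain ⟨i, hiA, hi⟩ := hstrict
  obtain ⟨s, hs⟩ := r.exists_eq_some_of_pref_lt hIR hi
  obtain ⟨⟨y, t⟩, hyt, hmin⟩ := Set.exists_min_image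
    {p : I × S | p.1 ∈ A ∧ ν p.1 = some p.2 ∧
      P.pref p.1 (r.outcome p.1) < P.pref p.1 (some p.2)}
    (fun p => r.groupExit p.2 p.1) (Set.toFinite _) ⟨(i, s), hiA, hs, hs ▸ hi⟩
  refine ⟨y, t, hyt.1, hyt.2.1, hyt.2.2, fun x hxA hxν hx => ?_⟩
  have hlt : P.pref x (r.outcome x) < P.pref x (ν x) :=
    lt_of_le_of_ne (hweak x hxA) fun h => hxν (P.pref_inj x h).symm
  obtain ⟨s', hs'⟩ := r.exists_eq_some_of_pref_lt hIR hlt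
  rw [hs'] at hlt
  exact (hmin (x, s') ⟨hxA, hs', hlt⟩).trans_lt (r.groupExit_lt_exit hx
    (occupantGroup_nonempty hWE hxA hs')
    (hfair.occupantGroup_subset_initActive ((r.pref_le_outcome x).trans_lt hlt)) hlt)

end Blocking

theorem not_wthnBlocks (hμ1 : P.IsMatch μ1) (hfair : P.Fair μ1) (hIR : P.IndRational μ1)
    (A : Set I) : ¬ P.WthnBlocks A r.outcome := by
  rintro ⟨ν, -, hWE, hweak, hstrict⟩
  obtain ⟨y, s, hyA, hνy, hys, hlate⟩ :=
    exists_improver_groupExit_lt hfair hIR hWE hweak hstrict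
  have hsat : ∀ {w t}, w ∈ A → ν w = some t → P.pref w (μ1 w) < P.pref w (some t) →
      P.occupantGroup μ1 t w ⊆ A :=
    fun hw hνw henvy => hWE.occupantGroup_subset hμ1 hfair (r.ncard_outcome_eq _) hw hνw henvy
  have henvy := (r.pref_le_outcome y).trans_lt hys
  obtain ⟨x, hxs, hxν, hbtw⟩ :=
    (hWE s ⟨y, hyA, hνy⟩).1.exists_btw_eq_of_mem_of_notMem hνy
      fun (h : r.outcome y = some s) => hys.ne (congrArg _ h)
  have hgroup := occupantGroup_eq_of_btw_eq (μ := μ1) hbtw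
  have hx : P.InitActive μ1 x := by
    by_contra h
    rw [Set.mem_ofPred_eq, r.outcome_eq_of_not_initActive h] at hxs
    exact h (hfair.occupantGroup_subset_initActive henvy (hgroup ▸ ⟨hxs, rfl⟩))
  have hxexit : r.exit x ≤ r.groupExit s y := r.exit_le_groupExit_of_outcome_eq hx hxs hbtw
  obtain ⟨n, c, d, hcyc, ⟨j₀, rfl⟩, hcd⟩ := r.exists_exit_cycle hx
  have hAct : ∀ i ∈ r.active (r.exit (c j₀)), P.InitActive μ1 i :=
    fun _ => r.initActive_of_mem_active (r.exit_spec hx).1.le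
  have hbase : P.occupantGroup μ1 (d j₀) (c j₀) ⊆ A := by
    rw [Option.some_inj.1 ((hcd j₀).1.symm.trans hxs), hgroup]
    exact hsat hyA hνy henvy
  refine (hlate _ (hcyc.forall_mem_of_occupantGroup_subset hAct hbase ?_ j₀)
    (fun h => hxν (h.trans hxs)) hx).not_ge hxexit
  -- A member of `A` who changes school along the cycle leaves TTC too early to be moved by `ν`,
  -- so `ν` gives her the TTC school, which she envied under `μ1`.
  intro j hw hdj
  obtain ⟨hw2, hwexit⟩ := hcd (j + 1)
  have hwμ1 := (hcyc.2.2.2 j).2.1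
  have hν : ν (c (j + 1)) = some (d (j + 1)) := by
    by_contra h
    exact (hlate _ hw (hw2 ▸ h) (hAct _ (hcyc.2.2.1 _).1)).not_ge (hwexit ▸ hxexit)
  have hle := r.pref_le_outcome (c (j + 1))
  rw [hw2] at hle
  refine hsat hw hν (lt_of_le_of_ne hle fun h => hdj ?_)
  rw [hwμ1] at h
  exact (Option.some_inj.1 (P.pref_inj _ h)).symm

end TTCRun

theorem IsTTCOutcome.exists_run {μ2 : I → Option S} (h : P.IsTTCOutcome μ1 μ2) :
    ∃ r : P.TTCRun μ1, r.outcome = μ2 := by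
  obtain ⟨m, st, h0, hstep, hend, rfl⟩ := h
  exact ⟨⟨m, st, h0, hstep, hend⟩, rfl⟩

end SchoolChoice

open SchoolChoice in
/-- the DA-TTC outcome is in the unified core. -/
theorem da_ttc_in_unified_core {I S : Type*} [Fintype I] [Fintype S]
    (P : SchoolChoice I S) (μ1 μ2 : I → Option S)
    (h1 : P.IsDAOutcome μ1) (h2 : P.IsTTCOutcome μ1 μ2) :
    P.UnifiedCore μ2 := by
  obtain ⟨r, rfl⟩ := h2.exists_run
  exact ⟨r.not_btwBlocks h1.isMatch h1.fair h1.indRational,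
    r.not_wthnBlocks h1.isMatch h1.fair h1.indRational⟩
end

section
/- The match μ1 produced by the student-proposing Deferred Acceptance algorithm is not between-group blocked by any coalition of students. -/
section Aux

open SchoolChoice

/-- Counting lemma: if `q ≤ |F|` then at least `q` members of `F` have fewer
than `q` members of `F` strictly above them w.r.t. an injective rank `w`. -/
lemma top_count {I : Type*} (w : I → ℕ) (hw : Function.Injective w)
    (F : Finset I) (q : ℕ) (hq : q ≤ F.card) :
    q ≤ (F.filter (fun j => (F.filter (fun j' => w j < w j')).card < q)).card := by
  classical
  set r : I → ℕ := fun j => (F.filter (fun j' => w j < w j')).card with hr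
  have hrlt : ∀ j ∈ F, r j < F.card := by
    intro j hj
    have hsub : F.filter (fun j' => w j < w j') ⊆ F.erase j := by
      intro x hx
      simp only [Finset.mem_filter] at hx
      refine Finset.mem_erase.2 ⟨?_, hx.1⟩
      rintro rfl; exact lt_irrefl _ hx.2
    calc r j ≤ (F.erase j).card := Finset.card_le_card hsub
    _ < F.card := Finset.card_erase_lt_of_mem hj
  have hmono : ∀ a ∈ F, ∀ b ∈ F, w a < w b → r b < r a := by
    intro a ha b hb h
    have hsub : insert b (F.filter (fun j' => w b < w j')) ⊆
        F.filter (fun j' => w a < w j') := by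
      intro x hx
      rcases Finset.mem_insert.1 hx with rfl | hx
      · exact Finset.mem_filter.2 ⟨hb, h⟩
      · have hx' := Finset.mem_filter.1 hx
        exact Finset.mem_filter.2 ⟨hx'.1, h.trans hx'.2⟩
    have hb' : b ∉ F.filter (fun j' => w b < w j') := by simp
    have hcard := Finset.card_le_card hsub
    rw [Finset.card_insert_of_notMem hb'] at hcard
    simp only [hr]
    omega
  have hinj : Set.InjOn r F := by
    intro a ha b hb hab
    by_contra hne
    rcases lt_or_gt_of_ne (fun e : w a = w b => hne (hw e)) with h | h
    · exact absurd hab (ne_of_gt (hmono a ha b hb h))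
    · exact absurd hab (ne_of_lt (hmono b hb a ha h))
  have himg : F.image r = Finset.range F.card := by
    apply Finset.eq_of_subset_of_card_le
    · intro m hm
      rcases Finset.mem_image.1 hm with ⟨j, hj, rfl⟩
      exact Finset.mem_range.2 (hrlt j hj)
    · rw [Finset.card_range, Finset.card_image_of_injOn hinj]
  have hfiltimg : (F.filter (fun j => r j < q)).image r =
      (Finset.range F.card).filter (fun m => m < q) := by
    rw [← himg]
    ext m
    simp only [Finset.mem_image, Finset.mem_filter]
    constructor
    · rintro ⟨j, ⟨hjF, hjq⟩, rfl⟩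
      exact ⟨⟨j, hjF, rfl⟩, hjq⟩
    · rintro ⟨⟨j, hjF, rfl⟩, hq'⟩
      exact ⟨j, ⟨hjF, hq'⟩, rfl⟩
  have hcard1 : ((F.filter (fun j => r j < q)).image r).card =
      (F.filter (fun j => r j < q)).card :=
    Finset.card_image_of_injOn (hinj.mono (by intro x hx; exact (Finset.mem_filter.1 hx).1))
  have hcard2 : ((Finset.range F.card).filter (fun m => m < q)).card = q := by
    have : (Finset.range F.card).filter (fun m => m < q) = Finset.range q := by
      ext m
      simp only [Finset.mem_filter, Finset.mem_range]
      omega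
    rw [this, Finset.card_range]
  rw [hfiltimg, hcard2] at hcard1
  simp only [hr] at hcard1
  exact hcard1.le

/-- If a student still proposes to `s` after more rejections not including `s`,
she keeps proposing to `s`. -/
lemma proposes_persist {I S : Type*} [Fintype I] [Fintype S] (P : SchoolChoice I S)
    (R R' : I → Set S) (j : I) (s : S) (hsub : R j ⊆ R' j) (hs : s ∉ R' j)
    (h : P.ProposesTo R j (some s)) : P.ProposesTo R' j (some s) := by
  refine ⟨?_, ?_⟩
  · rintro s' hs'
    injection hs' with hs''; subst hs''; exact hs
  · intro o' ho'
    exact h.2 o' (fun s' hs' hmem => ho' s' hs' (hsub hmem))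

/-- Invariant step: if school `s` has `≥ q s` proposers beating `i`
(within-group), this persists after one DA update. -/
lemma step_invariant {I S : Type*} [Fintype I] [Fintype S] (P : SchoolChoice I S)
    (R R' : I → Set S) (hR' : ∀ i, R' i = R i ∪ {s | P.Rejects R s i})
    (s : S) (i : I)
    (h : P.q s ≤ {j | P.ProposesTo R j (some s) ∧ P.wthn s i < P.wthn s j}.ncard) :
    P.q s ≤ {j | P.ProposesTo R' j (some s) ∧ P.wthn s i < P.wthn s j}.ncard := by
  classical
  have hfin : {j | P.ProposesTo R j (some s)}.Finite := Set.toFinite _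
  set F := hfin.toFinset with hF
  have hmemF : ∀ j, j ∈ F ↔ P.ProposesTo R j (some s) := by
    intro j; rw [hF, Set.Finite.mem_toFinset]; rfl
  have hq : P.q s ≤ F.card := by
    have hsub : {j | P.ProposesTo R j (some s) ∧ P.wthn s i < P.wthn s j} ⊆
        {j | P.ProposesTo R j (some s)} := fun j hj => hj.1
    have hle := Set.ncard_le_ncard hsub (Set.toFinite _)
    rw [Set.ncard_eq_toFinset_card _ hfin] at hle
    exact h.trans hle
  have key := top_count (P.wthn s) (P.wthn_inj s) F (P.q s) hq
  have hcoe : ∀ j, {j' | P.ProposesTo R j' (some s) ∧ P.wthn s j < P.wthn s j'}.ncard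
      = (F.filter (fun j' => P.wthn s j < P.wthn s j')).card := by
    intro j
    have : {j' | P.ProposesTo R j' (some s) ∧ P.wthn s j < P.wthn s j'} =
        ↑(F.filter (fun j' => P.wthn s j < P.wthn s j')) := by
      ext x
      simp only [Set.mem_setOf_eq, Finset.coe_filter, hmemF]
    rw [this, Set.ncard_coe_finset]
  have hsub : ((F.filter (fun j => (F.filter (fun j' => P.wthn s j < P.wthn s j')).card
      < P.q s)) : Set I) ⊆
      {j | P.ProposesTo R' j (some s) ∧ P.wthn s i < P.wthn s j} := by
    intro j hj
    simp only [Finset.coe_filter, Set.mem_setOf_eq] at hj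
    obtain ⟨hjF, hjcard⟩ := hj
    have hprop : P.ProposesTo R j (some s) := (hmemF j).1 hjF
    have hnotrej : ¬ P.Rejects R s j := by
      intro hrej
      have h2 := hrej.2
      rw [hcoe j] at h2
      omega
    have hwij : P.wthn s i < P.wthn s j := by
      by_contra hle
      push_neg at hle
      have hsub2 : {x | P.ProposesTo R x (some s) ∧ P.wthn s i < P.wthn s x} ⊆
          ↑(F.filter (fun j' => P.wthn s j < P.wthn s j')) := by
        intro x hx
        simp only [Finset.coe_filter, Set.mem_setOf_eq, hmemF]
        exact ⟨hx.1, lt_of_le_of_lt hle hx.2⟩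
      have hle2 := Set.ncard_le_ncard hsub2 (Set.toFinite _)
      rw [Set.ncard_coe_finset] at hle2
      omega
    have hsR' : s ∉ R' j := by
      rw [hR']
      rintro (h1 | h2)
      · exact hprop.1 s rfl h1
      · exact hnotrej h2
    refine ⟨proposes_persist P R R' j s ?_ hsR' hprop, hwij⟩
    rw [hR']; exact fun x hx => Or.inl hx
  have hfin2 := Set.ncard_le_ncard hsub (Set.toFinite _)
  rw [Set.ncard_coe_finset] at hfin2
  exact key.trans hfin2

/-- If `s` has ever rejected `i`, then at every later stage `s` has at least
`q s` proposers beating `i`. -/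
lemma rejected_invariant {I S : Type*} [Fintype I] [Fintype S] (P : SchoolChoice I S)
    (n : ℕ) (R : ℕ → I → Set S) (h0 : ∀ i, R 0 i = ∅)
    (hstep : ∀ k < n, P.DAStep (R k) (R (k + 1))) (s : S) (i : I)
    (hs : s ∈ R n i) :
    P.q s ≤ {j | P.ProposesTo (R n) j (some s) ∧ P.wthn s i < P.wthn s j}.ncard := by
  induction n with
  | zero => rw [h0 i] at hs; exact absurd hs (Set.notMem_empty s)
  | succ n ih =>
    have hupd := (hstep n (Nat.lt_succ_self n)).2
    by_cases hmem : s ∈ R n i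
    · have hprev := ih (fun k hk => hstep k (hk.trans (Nat.lt_succ_self n))) hmem
      exact step_invariant P (R n) (R (n + 1)) hupd s i hprev
    · have hrej : P.Rejects (R n) s i := by
        rw [hupd i] at hs
        rcases hs with h | h
        · exact absurd h hmem
        · exact h
      exact step_invariant P (R n) (R (n + 1)) hupd s i hrej.2

lemma da_ir {I S : Type*} [Fintype I] [Fintype S] (P : SchoolChoice I S)
    (μ1 : I → Option S) (h1 : P.IsDAOutcome μ1) : P.IndRational μ1 := by
  obtain ⟨n, R, h0, hstep, hterm, hprop⟩ := h1
  intro i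
  exact (hprop i).2 none (by rintro s' hs'; exact absurd hs' (by simp))

lemma da_fair {I S : Type*} [Fintype I] [Fintype S] (P : SchoolChoice I S)
    (μ1 : I → Option S) (h1 : P.IsDAOutcome μ1) : P.Fair μ1 := by
  obtain ⟨n, R, h0, hstep, hterm, hprop⟩ := h1
  rintro ⟨i, s, hpref, hblock⟩
  have hsRn : s ∈ R n i := by
    by_contra hns
    have hle := (hprop i).2 (some s)
      (by rintro s' hs'; injection hs' with hs''; subst hs''; exact hns)
    omega
  have hT := rejected_invariant P n R h0 hstep s i hsRn
  have hmatch : {j | μ1 j = some s} = {j | P.ProposesTo (R n) j (some s)} := by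
    ext j
    simp only [Set.mem_setOf_eq]
    constructor
    · intro hj
      have := hprop j
      rwa [hj] at this
    · intro hj
      have h1 := hj.2 (μ1 j) (hprop j).1
      have h2 := (hprop j).2 (some s) hj.1
      exact P.pref_inj j (le_antisymm h1 h2)
  have hsubT : {j | P.ProposesTo (R n) j (some s) ∧ P.wthn s i < P.wthn s j} ⊆
      {j | P.ProposesTo (R n) j (some s)} := fun j hj => hj.1
  have hcardP := hterm s
  have hcardT := Set.ncard_le_ncard hsubT (Set.toFinite _)
  have hEq : {j | P.ProposesTo (R n) j (some s) ∧ P.wthn s i < P.wthn s j} =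
      {j | P.ProposesTo (R n) j (some s)} :=
    Set.eq_of_subset_of_ncard_le hsubT (by omega) (Set.toFinite _)
  rcases hblock with ⟨j, hj, hwj⟩ | hcap
  · have : j ∈ {j | P.ProposesTo (R n) j (some s) ∧ P.wthn s i < P.wthn s j} := by
      rw [hEq, ← hmatch]; exact hj
    exact absurd hwj (not_lt.2 (le_of_lt this.2))
  · rw [hmatch] at hcap
    omega

end Aux

open SchoolChoice in
/-- the DA match is not between-group blocked by any coalition. -/
theorem da_not_between_blocked {I S : Type*} [Fintype I] [Fintype S]
    (P : SchoolChoice I S) (μ1 : I → Option S) (h1 : P.IsDAOutcome μ1) :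
    ∀ A : Set I, ¬ P.BtwBlocks A μ1 := by
  rintro A ⟨ν, hν, henf, hpref⟩
  obtain ⟨i, hiA, hlt⟩ := hpref.2
  have hfair := da_fair P μ1 h1
  cases hν' : ν i with
  | none =>
    have hir := da_ir P μ1 h1 i
    rw [hν'] at hlt
    omega
  | some s =>
    rw [hν'] at hlt
    rcases henf i hiA s hν' with ⟨j, hj, hbtw⟩ | hcap
    · exact hfair ⟨i, s, hlt, Or.inl ⟨j, hj, P.refines s j i hbtw⟩⟩
    · exact hfair ⟨i, s, hlt, Or.inr hcap⟩
end

section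
/- Fix a school s with between-group priority ≿_s extended responsively to sets of students. If two sets of students A and A′ satisfy A ∼_s A′ under this set extension, then for every student i the intersections with i's priority group have equal size: |[i]_s ∩ A| = |[i]_s ∩ A′|. -/
open SchoolChoice in
/-- if `A ∼_s A'` under the responsive set extension, then for
every student `i` the intersections with `i`'s priority group at `s` have the
same size. -/
theorem setSim_group_inter_card_eq {I S : Type*} [Fintype I] [Fintype S]
    (P : SchoolChoice I S) (s : S) (A A' : Set I) (h : P.SetSim s A A') :
    ∀ i : I, (P.Group s i ∩ A).ncard = (P.Group s i ∩ A').ncard := by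
  -- For any threshold t, SetGE gives an inequality on upper contour counts.
  have key : ∀ (B C : Set I), P.SetGE s B C → ∀ t : ℕ,
      ({j | t ≤ P.btw s j} ∩ C).ncard ≤ ({j | t ≤ P.btw s j} ∩ B).ncard := by
    rintro B C ⟨-, g, hinj, hmaps, hle⟩ t
    refine Set.ncard_le_ncard_of_injOn g ?_ ?_ (Set.toFinite _)
    · rintro j ⟨hjt, hjC⟩
      exact ⟨le_trans hjt (hle j hjC), hmaps hjC⟩
    · exact hinj.mono (Set.inter_subset_right)
  have heq : ∀ t : ℕ,
      ({j | t ≤ P.btw s j} ∩ A).ncard = ({j | t ≤ P.btw s j} ∩ A').ncard := by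
    intro t
    exact le_antisymm (key A' A h.2 t) (key A A' h.1 t)
  intro i
  set v := P.btw s i with hv
  have hsplit : ∀ B : Set I, (P.Group s i ∩ B) =
      ({j | v ≤ P.btw s j} ∩ B) \ ({j | v + 1 ≤ P.btw s j} ∩ B) := by
    intro B
    ext j
    simp only [Set.mem_inter_iff, Set.mem_diff, Set.mem_setOf_eq, SchoolChoice.Group]
    constructor
    · rintro ⟨hj, hjB⟩
      exact ⟨⟨le_of_eq hj.symm, hjB⟩, fun h' => by omega⟩
    · rintro ⟨⟨hj1, hjB⟩, hj2⟩
      refine ⟨?_, hjB⟩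
      by_contra hne
      exact hj2 ⟨by omega, hjB⟩
  have hcard : ∀ B : Set I, (P.Group s i ∩ B).ncard =
      ({j | v ≤ P.btw s j} ∩ B).ncard - ({j | v + 1 ≤ P.btw s j} ∩ B).ncard := by
    intro B
    rw [hsplit B]
    refine Set.ncard_diff ?_ (Set.toFinite _)
    rintro j ⟨hj, hjB⟩
    exact ⟨by simpa using Nat.le_of_succ_le hj, hjB⟩
  rw [hcard A, hcard A', heq v, heq (v + 1)]
end

section
/- Let μ1 be the Deferred Acceptance match and μ2 the match produced from μ1 by the restricted Top Trading Cycles stage. If a coalition A within-group blocks μ2 by within-group enforcing a match ν that A prefers to μ2, then A also within-group blocks μ1 by within-group enforcing the same ν over μ1. -/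
namespace SchoolChoice

variable {I S : Type*} [Fintype I] [Fintype S] (P : SchoolChoice I S)

lemma setGE_refl (s : S) (A : Set I) : P.SetGE s A A :=
  ⟨le_rfl, id, Set.injOn_id _, Set.mapsTo_id _, fun _ _ => le_rfl⟩

lemma setSim_refl (s : S) (A : Set I) : P.SetSim s A A :=
  ⟨P.setGE_refl s A, P.setGE_refl s A⟩

lemma setGE_trans {s : S} {A B C : Set I} (h1 : P.SetGE s A B) (h2 : P.SetGE s B C) :
    P.SetGE s A C := by
  obtain ⟨hn1, g1, hg1i, hg1m, hg1b⟩ := h1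
  obtain ⟨hn2, g2, hg2i, hg2m, hg2b⟩ := h2
  exact ⟨hn2.trans hn1, g1 ∘ g2, hg1i.comp hg2i hg2m, hg1m.comp hg2m,
    fun b hb => (hg2b b hb).trans (hg1b _ (hg2m hb))⟩

lemma setSim_trans {s : S} {A B C : Set I} (h1 : P.SetSim s A B) (h2 : P.SetSim s B C) :
    P.SetSim s A C :=
  ⟨P.setGE_trans h1.1 h2.1, P.setGE_trans h2.2 h1.2⟩

lemma setSim_swap {s : S} {A : Set I} {x y : I} (hx : x ∈ A) (hy : y ∉ A \ {x})
    (hbtw : P.btw s y = P.btw s x) : P.SetSim s A (insert y (A \ {x})) := by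
  classical
  rcases eq_or_ne y x with rfl | hyx
  · rw [Set.insert_diff_singleton, Set.insert_eq_self.2 hx]
    exact P.setSim_refl s A
  have hyA : y ∉ A := fun h => hy ⟨h, hyx⟩
  have hcard : (insert y (A \ {x})).ncard = A.ncard := Set.ncard_exchange hyA hx
  constructor
  · refine ⟨hcard.le, fun i => if i = y then x else i, ?_, ?_, ?_⟩
    · intro a ha b hb hab
      dsimp only at hab
      by_cases hay : a = y <;> by_cases hby : b = y
      · rw [hay, hby]
      · rw [if_pos hay, if_neg hby] at hab
        rcases Set.mem_insert_iff.1 hb with hb | hb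
        · exact absurd hb hby
        · exact absurd hab.symm hb.2
      · rw [if_neg hay, if_pos hby] at hab
        rcases Set.mem_insert_iff.1 ha with ha | ha
        · exact absurd ha hay
        · exact absurd hab ha.2
      · rwa [if_neg hay, if_neg hby] at hab
    · intro a ha
      dsimp only
      by_cases hay : a = y
      · rw [if_pos hay]; exact hx
      · rw [if_neg hay]
        rcases Set.mem_insert_iff.1 ha with ha | ha
        · exact absurd ha hay
        · exact ha.1
    · intro b hb
      dsimp only
      by_cases hby : b = y
      · rw [if_pos hby, hby]; exact hbtw.le
      · rw [if_neg hby]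
  · refine ⟨hcard.ge, fun i => if i = x then y else i, ?_, ?_, ?_⟩
    · intro a ha b hb hab
      dsimp only at hab
      by_cases hax : a = x <;> by_cases hbx : b = x
      · rw [hax, hbx]
      · rw [if_pos hax, if_neg hbx] at hab
        exact absurd (show y ∈ A from hab.symm ▸ hb) hyA
      · rw [if_neg hax, if_pos hbx] at hab
        exact absurd (show y ∈ A from hab ▸ ha) hyA
      · rwa [if_neg hax, if_neg hbx] at hab
    · intro a ha
      dsimp only
      by_cases hax : a = x
      · rw [if_pos hax]; exact Set.mem_insert _ _
      · rw [if_neg hax]; exact Set.mem_insert_of_mem _ ⟨ha, hax⟩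
    · intro b hb
      dsimp only
      by_cases hbx : b = x
      · rw [if_pos hbx, hbx]; exact hbtw.ge
      · rw [if_neg hbx]

/-- One TTC step preserves the key invariants. -/
lemma ttc_step_inv (μ1 : I → Option S) {st st' : Set I × (I → Option S)}
    (hstep : P.TTCStep μ1 st st')
    (h0 : st.1 ⊆ {i | P.InitActive μ1 i})
    (h1 : ∀ i ∈ st.1, st.2 i = μ1 i) :
    st'.1 ⊆ {i | P.InitActive μ1 i} ∧ (∀ i ∈ st'.1, st'.2 i = μ1 i) ∧
    (∀ i, P.pref i (st.2 i) ≤ P.pref i (st'.2 i)) ∧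
    (∀ s, P.SetSim s {i | st'.2 i = some s} {i | st.2 i = some s}) := by
  obtain ⟨n, c, d, ⟨hcinj, hdinj, hstu, hsch⟩, hAct', hc', hnc'⟩ := hstep
  have hcAct : ∀ k, c k ∈ st.1 := fun k => (hstu k).1
  have hμ1c : ∀ k, μ1 (c k) = some (d (k - 1)) := by
    intro k
    have := (hsch (k - 1)).2.1
    rwa [sub_add_cancel] at this
  have hst2c : ∀ k, st.2 (c k) = some (d (k - 1)) := fun k =>
    (h1 _ (hcAct k)).trans (hμ1c k)
  -- all active students matched to the same school by μ1 are in the same group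
  have hsame : ∀ (j j' : I) (s : S), j ∈ st.1 → j' ∈ st.1 →
      μ1 j = some s → μ1 j' = some s → P.btw s j = P.btw s j' := by
    intro j j' s hj hj' hμj hμj'
    obtain ⟨s1, hs1, hall⟩ := h0 hj
    obtain ⟨s2, hs2, hall'⟩ := h0 hj'
    rw [hμj] at hs1; rw [hμj'] at hs2
    obtain rfl := Option.some_injective _ hs1
    obtain rfl := Option.some_injective _ hs2
    exact le_antisymm (hall _ hμj') (hall' _ hμj)
  have hbtweq : ∀ k, P.btw (d k) (c k) = P.btw (d k) (c (k + 1)) := by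
    intro k
    obtain ⟨j', hj', hμj', hbj'⟩ := (hstu k).2.1
    have hμck1 : μ1 (c (k + 1)) = some (d k) := by
      rw [hμ1c (k + 1), add_sub_cancel_right]
    rw [hbj']
    exact hsame j' (c (k + 1)) (d k) hj' (hcAct (k + 1)) hμj' hμck1
  refine ⟨?_, ?_, ?_, ?_⟩
  · intro i hi
    exact h0 (by rw [hAct'] at hi; exact hi.1)
  · intro i hi
    rw [hAct'] at hi
    rw [hnc' i hi.2]
    exact h1 i hi.1
  · intro i
    by_cases hir : i ∈ Set.range c
    · obtain ⟨k, rfl⟩ := hir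
      rw [hst2c k, hc' k]
      refine (hstu k).2.2 (d (k - 1)) ?_
      exact ⟨c k, hcAct k, hμ1c k, rfl⟩
    · rw [hnc' i hir]
  · intro s
    by_cases hsr : s ∈ Set.range d
    · obtain ⟨j, rfl⟩ := hsr
      have hxmem : c (j + 1) ∈ {i | st.2 i = some (d j)} := by
        show st.2 (c (j + 1)) = some (d j)
        rw [hst2c (j + 1), add_sub_cancel_right]
      have hymem : c j ∉ {i | st.2 i = some (d j)} \ {c (j + 1)} := by
        rintro ⟨hmem, hne⟩
        have hd : d (j - 1) = d j := Option.some_injective _ ((hst2c j).symm.trans hmem)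
        have : j = j + 1 := by
          have := congrArg (· + 1) (hdinj hd)
          simpa [sub_add_cancel] using this
        exact hne (by rw [← this]; rfl)
      have hset : {i | st'.2 i = some (d j)} =
          insert (c j) ({i | st.2 i = some (d j)} \ {c (j + 1)}) := by
        ext i
        by_cases hir : i ∈ Set.range c
        · obtain ⟨k, rfl⟩ := hir
          simp only [Set.mem_setOf_eq, Set.mem_insert_iff, Set.mem_diff,
            Set.mem_singleton_iff, hc' k, hst2c k]
          constructor
          · intro hk
            exact Or.inl (congrArg c (hdinj (Option.some_injective _ hk)))
          · rintro (hk | ⟨hk, hne⟩)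
            · rw [hcinj hk]
            · exfalso
              have : k = j + 1 := by
                have := congrArg (· + 1) (hdinj (Option.some_injective _ hk))
                simpa [sub_add_cancel] using this
              exact hne (congrArg c this)
        · have hne1 : i ≠ c j := fun h => hir ⟨j, h.symm⟩
          have hne2 : i ≠ c (j + 1) := fun h => hir ⟨j + 1, h.symm⟩
          simp [hnc' i hir, hne1, hne2]
      rw [hset]
      have := P.setSim_swap (s := d j) hxmem hymem (hbtweq j)
      exact ⟨this.2, this.1⟩
    · have hset : {i | st'.2 i = some s} = {i | st.2 i = some s} := by
        ext i
        by_cases hir : i ∈ Set.range c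
        · obtain ⟨k, rfl⟩ := hir
          simp only [Set.mem_setOf_eq, hc' k, hst2c k]
          constructor
          · intro hk; exact absurd ⟨k, Option.some_injective _ hk⟩ hsr
          · intro hk; exact absurd ⟨k - 1, Option.some_injective _ hk⟩ hsr
        · rw [Set.mem_setOf_eq, Set.mem_setOf_eq, hnc' i hir]
      rw [hset]
      exact P.setSim_refl s _

end SchoolChoice

open SchoolChoice in
/-- if a coalition within-group blocks `μ2` by within-group
enforcing `ν`, then it also within-group blocks `μ1` by within-group
enforcing the same `ν`. -/
theorem within_block_transfers {I S : Type*} [Fintype I] [Fintype S]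
    (P : SchoolChoice I S) (μ1 μ2 : I → Option S)
    (h1 : P.IsDAOutcome μ1) (h2 : P.IsTTCOutcome μ1 μ2)
    (A : Set I) (ν : I → Option S) (hν : P.IsMatch ν)
    (henf : P.WthnEnforce A ν μ2) (hpref : P.Prefers A ν μ2) :
    P.WthnEnforce A ν μ1 ∧ P.Prefers A ν μ1 := by
  obtain ⟨m, st, hst0, hsteps, hstm, hμ2⟩ := h2
  have key : ∀ k, k ≤ m → (st k).1 ⊆ {i | P.InitActive μ1 i} ∧
      (∀ i ∈ (st k).1, (st k).2 i = μ1 i) ∧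
      (∀ i, P.pref i (μ1 i) ≤ P.pref i ((st k).2 i)) ∧
      (∀ s, P.SetSim s {i | (st k).2 i = some s} {i | μ1 i = some s}) := by
    intro k
    induction k with
    | zero =>
      intro _
      rw [hst0]
      exact ⟨subset_rfl, fun i _ => rfl, fun i => le_rfl, fun s => P.setSim_refl s _⟩
    | succ k ih =>
      intro hk
      have hk' := Nat.lt_of_succ_le hk
      obtain ⟨i0, i1, i2, i3⟩ := ih hk'.le
      obtain ⟨j0, j1, j2, j3⟩ := P.ttc_step_inv μ1 (hsteps k hk') i0 i1
      exact ⟨j0, j1, fun i => (i2 i).trans (j2 i), fun s => P.setSim_trans (j3 s) (i3 s)⟩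
  obtain ⟨_, _, himp, hsim⟩ := key m le_rfl
  have himp2 : ∀ i, P.pref i (μ1 i) ≤ P.pref i (μ2 i) := by rw [hμ2]; exact himp
  have hsim2 : ∀ s, P.SetSim s {i | μ2 i = some s} {i | μ1 i = some s} := by
    rw [hμ2]; exact hsim
  constructor
  · intro s hs
    obtain ⟨hs1, hs2⟩ := henf s hs
    exact ⟨P.setSim_trans hs1 (hsim2 s), hs2⟩
  · obtain ⟨hw, i, hiA, hilt⟩ := hpref
    exact ⟨fun j hj => (himp2 j).trans (hw j hj), i, hiA, lt_of_le_of_lt (himp2 i) hilt⟩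
end

section
/- Let μ1 be the Deferred Acceptance match and μ2 the match produced from μ1 by the restricted Top Trading Cycles stage. If a coalition A between-group blocks μ2 by between-group enforcing a match ν that A prefers to μ2, then A also between-group blocks μ1 by between-group enforcing the same ν over μ1. -/
/-! Each TTC cycle only rotates the `μ1`-seats of its students, who are still active and hence
still hold them; so `μ2 = μ1 ∘ σ` for a permutation `σ` and every school keeps its number of
occupants. A student trades only into a school admissible to her, so each `μ2`-occupant of `s`
shares a priority group with some `μ1`-occupant of `s`; her own `μ1`-school is admissible, so she
weakly gains. Hence every displacement or empty seat enforcing `ν` over `μ2` is available over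
`μ1` as well, and the preference of `A` for `ν` over `μ2` carries over to `μ1`. -/

theorem Equiv.Perm.exists_apply_eq_succ_of_injective {α : Type*} {n : ℕ} {c : Fin (n + 1) → α}
    (hc : Function.Injective c) :
    ∃ f : Equiv.Perm α, (∀ k, f (c k) = c (k + 1)) ∧ ∀ a ∉ Set.range c, f a = a := by
  classical
  refine ⟨(finRotate (n + 1)).viaFintypeEmbedding ⟨c, hc⟩, fun k => ?_, fun a ha => ?_⟩
  · simpa using (finRotate (n + 1)).viaFintypeEmbedding_apply_image ⟨c, hc⟩ k
  · exact Equiv.Perm.viaFintypeEmbedding_apply_notMem_range _ _ ha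

namespace SchoolChoice

variable {I S : Type*} [Fintype I] [Fintype S] {P : SchoolChoice I S}

theorem Prefers.of_pref_le {A : Set I} {ν μ μ' : I → Option S} (h : P.Prefers A ν μ')
    (hle : ∀ i ∈ A, P.pref i (μ i) ≤ P.pref i (μ' i)) : P.Prefers A ν μ := by
  obtain ⟨hweak, i, hi, hlt⟩ := h
  exact ⟨fun j hj => (hle j hj).trans (hweak j hj), i, hi, (hle i hi).trans_lt hlt⟩

theorem BtwEnforce.of_ncard_le_of_btw_le {A : Set I} {ν μ μ' : I → Option S}
    (h : P.BtwEnforce A ν μ')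
    (hcard : ∀ s, {j | μ j = some s}.ncard ≤ {j | μ' j = some s}.ncard)
    (hbtw : ∀ j s, μ' j = some s → ∃ j', μ j' = some s ∧ P.btw s j' ≤ P.btw s j) :
    P.BtwEnforce A ν μ := by
  intro i hi s hs
  rcases h i hi s hs with ⟨j, hj, hlt⟩ | hfree
  · obtain ⟨j', hj', hle⟩ := hbtw j s hj
    exact Or.inl ⟨j', hj', hle.trans_lt hlt⟩
  · exact Or.inr ((hcard s).trans_lt hfree)

variable (P) in
structure TTCInvariant (μ1 : I → Option S) (st : Set I × (I → Option S)) : Prop where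
  subset_initActive : st.1 ⊆ {i | P.InitActive μ1 i}
  eq_of_mem_active : ∀ i ∈ st.1, st.2 i = μ1 i
  exists_perm : ∃ σ : Equiv.Perm I, st.2 = μ1 ∘ σ
  pref_le : ∀ i, P.pref i (μ1 i) ≤ P.pref i (st.2 i)
  exists_btw_eq : ∀ i s, st.2 i = some s → ∃ j, μ1 j = some s ∧ P.btw s j = P.btw s i

theorem ttcInvariant_init (μ1 : I → Option S) :
    P.TTCInvariant μ1 ({i | P.InitActive μ1 i}, μ1) where
  subset_initActive := subset_rfl
  eq_of_mem_active _ _ := rfl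
  exists_perm := ⟨1, rfl⟩
  pref_le _ := le_rfl
  exists_btw_eq i _ hs := ⟨i, hs, rfl⟩

theorem TTCInvariant.ttcStep {μ1 : I → Option S} {st st' : Set I × (I → Option S)}
    (hinv : P.TTCInvariant μ1 st) (hstep : P.TTCStep μ1 st st') : P.TTCInvariant μ1 st' := by
  obtain ⟨n, c, d, ⟨hc, -, hstu, hsch⟩, hact, hassign, hother⟩ := hstep
  obtain ⟨f, hfc, hfix⟩ := Equiv.Perm.exists_apply_eq_succ_of_injective hc
  -- Each school on the cycle passes the seat of the next student, who is still active.
  have hrot : st'.2 = st.2 ∘ f := by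
    funext i
    by_cases hi : i ∈ Set.range c
    · obtain ⟨k, rfl⟩ := hi
      rw [Function.comp_apply, hfc, hassign, hinv.eq_of_mem_active _ (hsch k).1, (hsch k).2.1]
    · rw [Function.comp_apply, hother i hi, hfix i hi]
  refine ⟨?_, ?_, ?_, fun i => ?_, fun i s hs => ?_⟩
  · exact hact ▸ fun i hi => hinv.subset_initActive hi.1
  · intro i hi
    rw [hact] at hi
    rw [hother i hi.2, hinv.eq_of_mem_active i hi.1]
  · obtain ⟨σ, hσ⟩ := hinv.exists_perm
    exact ⟨f.trans σ, by rw [hrot, hσ]; rfl⟩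
  · by_cases hi : i ∈ Set.range c
    · obtain ⟨k, rfl⟩ := hi
      obtain ⟨s, hs, -⟩ := hinv.subset_initActive (hstu k).1
      rw [hassign, hs]
      exact (hstu k).2.2 s ⟨c k, (hstu k).1, hs, rfl⟩
    · rw [hother i hi]
      exact hinv.pref_le i
  · by_cases hi : i ∈ Set.range c
    · obtain ⟨k, rfl⟩ := hi
      obtain rfl : d k = s := Option.some.inj ((hassign k).symm.trans hs)
      obtain ⟨j, -, hj, hbtw⟩ := (hstu k).2.1
      exact ⟨j, hj, hbtw.symm⟩
    · rw [hother i hi] at hs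
      exact hinv.exists_btw_eq i s hs

theorem IsTTCOutcome.ttcInvariant {μ1 μ2 : I → Option S} (h : P.IsTTCOutcome μ1 μ2) :
    P.TTCInvariant μ1 (∅, μ2) := by
  obtain ⟨m, st, hst0, hsteps, hempty, rfl⟩ := h
  have hreach : ∀ k ≤ m, P.TTCInvariant μ1 (st k) := by
    intro k
    induction k with
    | zero => exact fun _ => hst0 ▸ ttcInvariant_init μ1
    | succ k ih => exact fun hk => (ih (by omega)).ttcStep (hsteps k hk)
  exact hempty ▸ hreach m le_rfl

end SchoolChoice

open SchoolChoice in
theorem between_block_transfers_general {I S : Type*} [Fintype I] [Fintype S]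
    (P : SchoolChoice I S) (μ1 μ2 : I → Option S)
    (h2 : P.IsTTCOutcome μ1 μ2)
    (A : Set I) (ν : I → Option S)
    (henf : P.BtwEnforce A ν μ2) (hpref : P.Prefers A ν μ2) :
    P.BtwEnforce A ν μ1 ∧ P.Prefers A ν μ1 := by
  have hinv := h2.ttcInvariant
  obtain ⟨σ, hσ : μ2 = μ1 ∘ σ⟩ := hinv.exists_perm
  have hcard : ∀ s, {j | μ1 j = some s}.ncard ≤ {j | μ2 j = some s}.ncard := fun s => by
    rw [hσ]
    exact (Set.ncard_preimage_of_injective_subset_range σ.injective (by simp)).ge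
  refine ⟨henf.of_ncard_le_of_btw_le hcard fun j s hj => ?_,
    hpref.of_pref_le fun i _ => hinv.pref_le i⟩
  obtain ⟨j', hj', hbtw⟩ := hinv.exists_btw_eq j s hj
  exact ⟨j', hj', hbtw.le⟩

open SchoolChoice in
/-- if a coalition between-group blocks `μ2` by between-group
enforcing `ν`, then it also between-group blocks `μ1` by between-group
enforcing the same `ν`. -/
theorem between_block_transfers {I S : Type*} [Fintype I] [Fintype S]
    (P : SchoolChoice I S) (μ1 μ2 : I → Option S)
    (h1 : P.IsDAOutcome μ1) (h2 : P.IsTTCOutcome μ1 μ2)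
    (A : Set I) (ν : I → Option S) (hν : P.IsMatch ν)
    (henf : P.BtwEnforce A ν μ2) (hpref : P.Prefers A ν μ2) :
    P.BtwEnforce A ν μ1 ∧ P.Prefers A ν μ1 :=
  between_block_transfers_general P μ1 μ2 h2 A ν henf hpref
end

section
/- Let μ1 be the Deferred Acceptance match and μ2 the match produced from μ1 by the restricted Top Trading Cycles stage. Then μ2 is a weak Pareto improvement of μ1 for the students: every student i satisfies μ2(i) ≿_i μ1(i). -/
open SchoolChoice in
/-- the TTC-stage outcome `μ2` is a weak Pareto improvement of
the DA match `μ1` for the students. -/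
theorem ttc_weak_pareto_improvement {I S : Type*} [Fintype I] [Fintype S]
    (P : SchoolChoice I S) (μ1 μ2 : I → Option S)
    (h1 : P.IsDAOutcome μ1) (h2 : P.IsTTCOutcome μ1 μ2) :
    ∀ i : I, P.pref i (μ1 i) ≤ P.pref i (μ2 i) := by
  obtain ⟨m, st, h0, hstep, -, hμ2⟩ := h2
  -- invariant: at every step k ≤ m, every student weakly prefers (st k).2 to μ1
  have key : ∀ k ≤ m, ∀ i, P.pref i (μ1 i) ≤ P.pref i ((st k).2 i) := by
    intro k
    induction k with
    | zero => intro _ i; simp [h0]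
    | succ k ih =>
      intro hk i
      have ihk := ih (Nat.le_of_succ_le hk)
      obtain ⟨n, c, d, ⟨-, -, hstu, hsch⟩, -, hc, hnc⟩ := hstep k hk
      by_cases hi : i ∈ Set.range c
      · obtain ⟨j, rfl⟩ := hi
        have hμ1 : μ1 (c j) = some (d (j - 1)) := by
          have := (hsch (j - 1)).2.1
          rwa [sub_add_cancel] at this
        obtain ⟨hact, -, hmax⟩ := hstu j
        have hadm : P.Admissible μ1 (st k).1 (c j) (d (j - 1)) :=
          ⟨c j, hact, hμ1, rfl⟩
        calc P.pref (c j) (μ1 (c j)) = P.pref (c j) (some (d (j - 1))) := by rw [hμ1]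
          _ ≤ P.pref (c j) (some (d j)) := hmax _ hadm
          _ = P.pref (c j) ((st (k + 1)).2 (c j)) := by rw [hc j]
      · rw [hnc i hi]; exact ihk i
  intro i
  rw [hμ2]
  exact key m le_rfl i
end

section
/- Let μ1 be the Deferred Acceptance match and μ2 the match produced from μ1 by the restricted Top Trading Cycles stage. Then for every school s, the sets of students assigned to s under μ2 and under μ1 have the same cardinality, |μ2⁻¹(s)| = |μ1⁻¹(s)|, and are indifferent under the responsive set extension of the between-group priority: μ2⁻¹(s) ∼_s μ1⁻¹(s). In particular, μ2 is a well-defined match respecting all capacities. -/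
open SchoolChoice in
/-- at every school, `μ2` and `μ1` assign sets of students of the
same size that are indifferent under the responsive set extension of the
between-group priority; in particular `μ2` is a match respecting capacities. -/
theorem ttc_school_sets_indifferent {I S : Type*} [Fintype I] [Fintype S]
    (P : SchoolChoice I S) (μ1 μ2 : I → Option S)
    (h1 : P.IsDAOutcome μ1) (h2 : P.IsTTCOutcome μ1 μ2) :
    (∀ s : S, {j | μ2 j = some s}.ncard = {j | μ1 j = some s}.ncard ∧
      P.SetSim s {j | μ2 j = some s} {j | μ1 j = some s}) ∧
    P.IsMatch μ2 := by
  classical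
  -- Extract the DA data: μ1 is a match.
  obtain ⟨nn, R, -, -, hterm, hprop⟩ := h1
  have hμ1match : P.IsMatch μ1 := by
    intro s
    refine le_trans (Set.ncard_le_ncard ?_ (Set.toFinite _)) (hterm s)
    intro i hi
    have := hprop i
    rw [Set.mem_setOf_eq] at hi
    rw [hi] at this
    exact this
  -- Extract the TTC data.
  obtain ⟨m, st, h0, hstep, -, hμ2⟩ := h2
  -- Main invariant, by induction on the round number.
  have key : ∀ k ≤ m, (st k).1 ⊆ {i | P.InitActive μ1 i} ∧
      ∃ σ : Equiv.Perm I, (∀ i ∈ (st k).1, σ i = i) ∧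
        (∀ j, (st k).2 j = μ1 (σ j)) ∧
        (∀ j s, (st k).2 j = some s → P.btw s j = P.btw s (σ j)) := by
    intro k hk
    induction k with
    | zero =>
      rw [h0]
      exact ⟨le_refl _, Equiv.refl I, fun _ _ => rfl, fun _ => rfl,
        fun _ _ _ => rfl⟩
    | succ k ih =>
      obtain ⟨hAct, σ, hσfix, hσμ, hσbtw⟩ := ih (le_of_lt (Nat.lt_of_succ_le hk))
      obtain ⟨n, c, d, ⟨hcinj, hdinj, hstu, hsch⟩, hA', hcnew, hrest⟩ :=
        hstep k (Nat.lt_of_succ_le hk)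
      -- the cycle permutation
      set τ : Equiv.Perm I :=
        (finRotate (n + 1)).viaFintypeEmbedding ⟨c, hcinj⟩ with hτ
      have hτc : ∀ kk : Fin (n + 1), τ (c kk) = c (kk + 1) := by
        intro kk
        have := Equiv.Perm.viaFintypeEmbedding_apply_image (finRotate (n + 1))
          ⟨c, hcinj⟩ kk
        simpa using this
      have hτfix : ∀ i, i ∉ Set.range c → τ i = i := by
        intro i hi
        exact Equiv.Perm.viaFintypeEmbedding_apply_notMem_range _ _ hi
      -- key between-group equality along the cycle
      have hbtwcyc : ∀ kk : Fin (n + 1),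
          P.btw (d kk) (c kk) = P.btw (d kk) (c (kk + 1)) := by
        intro kk
        obtain ⟨-, ⟨j', hj'A, hj'μ, hj'btw⟩, -⟩ := hstu kk
        obtain ⟨hck1A, hck1μ, -⟩ := hsch kk
        have hj'init : P.InitActive μ1 j' := hAct hj'A
        have hck1init : P.InitActive μ1 (c (kk + 1)) := hAct hck1A
        obtain ⟨s1, hs1, hmin1⟩ := hj'init
        obtain ⟨s2, hs2, hmin2⟩ := hck1init
        rw [hj'μ] at hs1
        rw [hck1μ] at hs2
        cases Option.some_injective _ hs1
        cases Option.some_injective _ hs2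
        rw [hj'btw]
        exact le_antisymm (hmin1 _ hck1μ) (hmin2 _ hj'μ)
      refine ⟨?_, τ.trans σ, ?_, ?_, ?_⟩
      · rw [hA']
        exact fun i hi => hAct hi.1
      · intro i hi
        rw [hA'] at hi
        simp only [Equiv.trans_apply]
        rw [hτfix i hi.2, hσfix i hi.1]
      · intro j
        by_cases hj : j ∈ Set.range c
        · obtain ⟨kk, rfl⟩ := hj
          simp only [Equiv.trans_apply]
          rw [hτc kk, hcnew kk]
          obtain ⟨hck1A, hck1μ, -⟩ := hsch kk
          rw [hσfix _ hck1A, hck1μ]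
        · simp only [Equiv.trans_apply]
          rw [hτfix j hj, hrest j hj, hσμ j]
      · intro j s hjs
        by_cases hj : j ∈ Set.range c
        · obtain ⟨kk, rfl⟩ := hj
          have hds : some (d kk) = some s := (hcnew kk).symm.trans hjs
          cases Option.some_injective _ hds
          simp only [Equiv.trans_apply]
          rw [hτc kk]
          obtain ⟨hck1A, hck1μ, -⟩ := hsch kk
          rw [hσfix _ hck1A]
          exact hbtwcyc kk
        · simp only [Equiv.trans_apply]
          rw [hτfix j hj]
          apply hσbtw
          rw [← hrest j hj]
          exact hjs
  obtain ⟨-, σ, -, hσμ, hσbtw⟩ := key m (le_refl m)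
  rw [← hμ2] at hσμ hσbtw
  -- μ2⁻¹(s) is the σ-preimage of μ1⁻¹(s)
  have hpre : ∀ s : S, {j | μ2 j = some s} = σ.symm '' {j | μ1 j = some s} := by
    intro s
    ext j
    simp only [Set.mem_setOf_eq, Set.mem_image]
    constructor
    · intro hj
      exact ⟨σ j, by rw [← hσμ j]; exact hj, σ.symm_apply_apply j⟩
    · rintro ⟨b, hb, rfl⟩
      rw [hσμ, σ.apply_symm_apply]
      exact hb
  have hcard : ∀ s : S, {j | μ2 j = some s}.ncard = {j | μ1 j = some s}.ncard := by
    intro s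
    rw [hpre s]
    exact Set.ncard_image_of_injective _ σ.symm.injective
  have hbtweq : ∀ j s, μ2 j = some s → P.btw s j = P.btw s (σ j) := hσbtw
  refine ⟨fun s => ⟨hcard s, ?_, ?_⟩, ?_⟩
  · -- SetGE s μ2set μ1set, with g = σ.symm
    refine ⟨(hcard s).ge, σ.symm, σ.symm.injective.injOn, ?_, ?_⟩
    · intro b hb
      rw [Set.mem_setOf_eq] at hb ⊢
      rw [hσμ, σ.apply_symm_apply]
      exact hb
    · intro b hb
      rw [Set.mem_setOf_eq] at hb
      have : μ2 (σ.symm b) = some s := by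
        rw [hσμ, σ.apply_symm_apply]; exact hb
      have := hbtweq _ _ this
      rw [σ.apply_symm_apply] at this
      exact this.ge
  · -- SetGE s μ1set μ2set, with g = σ
    refine ⟨(hcard s).le, σ, σ.injective.injOn, ?_, ?_⟩
    · intro b hb
      rw [Set.mem_setOf_eq] at hb ⊢
      rw [← hσμ]
      exact hb
    · intro b hb
      exact (hbtweq b s hb).le
  · intro s
    rw [hcard s]
    exact hμ1match s
end

section
/- Every individually rational fair match is not between-group blocked by any coalition: if μ is individually rational and there is no student i and school s with s ≻_i μ(i) such that either some j ∈ μ⁻¹(s) has i ≻*_s j or |μ⁻¹(s)| < q_s, then no coalition between-group blocks μ. -/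
open SchoolChoice in
/-- every individually rational fair match is not between-group
blocked by any coalition. -/
theorem fair_not_between_blocked {I S : Type*} [Fintype I] [Fintype S]
    (P : SchoolChoice I S) (μ : I → Option S) (hμ : P.IsMatch μ)
    (hir : P.IndRational μ) (hf : P.Fair μ) :
    ∀ A : Set I, ¬ P.BtwBlocks A μ := by
  intro A hblock
  obtain ⟨ν, -, henf, hweak, i, hiA, hlt⟩ := hblock
  cases hνi : ν i with
  | none =>
    rw [hνi] at hlt
    exact absurd (hir i) (not_le.mpr hlt)
  | some s =>
    rw [hνi] at hlt
    apply hf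
    refine ⟨i, s, hlt, ?_⟩
    rcases henf i hiA s hνi with ⟨j, hjs, hbtw⟩ | hcap
    · exact Or.inl ⟨j, hjs, P.refines s j i hbtw⟩
    · exact Or.inr hcap
end

section
/- Suppose that at every school s the between-group priority ≿_s is a strict total order on the students (every priority group is a singleton), so that the within-group priority ≻*_s coincides with ≻_s. Then the unified core coincides with the set of individually rational fair matches: a match μ is in the unified core if and only if μ is individually rational and fair. -/
open SchoolChoice in
private lemma setGE_sum_aux {I S : Type*} [Fintype I] [Fintype S]
    (P : SchoolChoice I S) (s : S) (A B : Set I)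
    (h : P.SetGE s A B) (hc : B.ncard = A.ncard) :
    ∑ x ∈ B.toFinite.toFinset, P.btw s x ≤ ∑ x ∈ A.toFinite.toFinset, P.btw s x := by
  classical
  obtain ⟨-, g, hginj, hgmap, hgle⟩ := h
  have himg : g '' B = A := by
    apply Set.eq_of_subset_of_ncard_le (Set.image_subset_iff.mpr hgmap)
    rw [Set.ncard_image_of_injOn hginj, hc]
  have hBfin : ∀ x, x ∈ B.toFinite.toFinset ↔ x ∈ B := fun x => Set.Finite.mem_toFinset _
  calc ∑ x ∈ B.toFinite.toFinset, P.btw s x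
      ≤ ∑ x ∈ B.toFinite.toFinset, P.btw s (g x) :=
        Finset.sum_le_sum (fun x hx => hgle x ((hBfin x).mp hx))
    _ = ∑ y ∈ B.toFinite.toFinset.image g, P.btw s y := by
        rw [Finset.sum_image (fun x hx y hy hxy => hginj ((hBfin x).mp hx) ((hBfin y).mp hy) hxy)]
    _ = ∑ x ∈ A.toFinite.toFinset, P.btw s x := by
        congr 1
        ext y
        simp only [Finset.mem_image, Set.Finite.mem_toFinset]
        rw [← himg]
        simp [Set.mem_image]

open SchoolChoice in
private lemma setSim_eq_aux {I S : Type*} [Fintype I] [Fintype S]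
    (P : SchoolChoice I S) (s : S) (hstrict : Function.Injective (P.btw s))
    (A B : Set I) (h : P.SetSim s A B) : A = B := by
  classical
  obtain ⟨h1, h2⟩ := h
  have hc : A.ncard = B.ncard := le_antisymm h2.1 h1.1
  have hs1 := setGE_sum_aux P s A B h1 hc.symm
  have hs2 := setGE_sum_aux P s B A h2 hc
  have hsum : ∑ x ∈ A.toFinite.toFinset, P.btw s x = ∑ x ∈ B.toFinite.toFinset, P.btw s x :=
    le_antisymm hs2 hs1
  -- use the map f : A → B from h2
  obtain ⟨-, f, hfinj, hfmap, hfle⟩ := h2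
  have hAfin : ∀ x, x ∈ A.toFinite.toFinset ↔ x ∈ A := fun x => Set.Finite.mem_toFinset _
  have himg : f '' A = B := by
    apply Set.eq_of_subset_of_ncard_le (Set.image_subset_iff.mpr hfmap)
    rw [Set.ncard_image_of_injOn hfinj, hc]
  have himgfin : A.toFinite.toFinset.image f = B.toFinite.toFinset := by
    ext y
    simp only [Finset.mem_image, Set.Finite.mem_toFinset]
    rw [← himg]
    simp [Set.mem_image]
  have hsumf : ∑ x ∈ A.toFinite.toFinset, P.btw s x
      = ∑ x ∈ A.toFinite.toFinset, P.btw s (f x) := by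
    calc ∑ x ∈ A.toFinite.toFinset, P.btw s x
        = ∑ x ∈ B.toFinite.toFinset, P.btw s x := hsum
      _ = ∑ y ∈ A.toFinite.toFinset.image f, P.btw s y := by rw [himgfin]
      _ = ∑ x ∈ A.toFinite.toFinset, P.btw s (f x) :=
          Finset.sum_image (fun x hx y hy hxy => hfinj ((hAfin x).mp hx) ((hAfin y).mp hy) hxy)
  have hpt : ∀ x ∈ A.toFinite.toFinset, P.btw s x = P.btw s (f x) :=
    (Finset.sum_eq_sum_iff_of_le (fun x hx => hfle x ((hAfin x).mp hx))).mp hsumf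
  have hAB : A ⊆ B := by
    intro x hx
    have hfx : f x = x := (hstrict (hpt x ((hAfin x).mpr hx)).symm)
    have := hfmap hx
    rwa [hfx] at this
  exact Set.eq_of_subset_of_ncard_le hAB hc.ge

open SchoolChoice in
/-- when every between-group priority is a strict total order
(all priority groups are singletons), the unified core coincides with the set
of individually rational fair matches. -/
theorem unified_core_eq_fair_when_strict {I S : Type*} [Fintype I] [Fintype S]
    (P : SchoolChoice I S) (hstrict : ∀ s : S, Function.Injective (P.btw s))
    (μ : I → Option S) (hμ : P.IsMatch μ) :
    P.UnifiedCore μ ↔ (P.IndRational μ ∧ P.Fair μ) := by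
  classical
  constructor
  · rintro ⟨hbtw, -⟩
    have hIR : P.IndRational μ := by
      intro i
      by_contra hir
      push_neg at hir
      apply hbtw {i}
      refine ⟨Function.update μ i none, ?_, ?_, ?_, ⟨i, rfl, ?_⟩⟩
      · intro t
        refine le_trans (Set.ncard_le_ncard ?_ (Set.toFinite _)) (hμ t)
        intro j hj
        simp only [Set.mem_setOf_eq] at hj ⊢
        rcases eq_or_ne j i with rfl | hji
        · simp at hj
        · rwa [Function.update_of_ne hji] at hj
      · rintro k hk t hkt
        rcases hk
        simp at hkt
      · rintro k hk
        cases hk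
        simp only [Function.update_self]
        exact hir.le
      · simpa using hir
    refine ⟨hIR, ?_⟩
    intro ⟨i, s, hpref, hcase⟩
    have hμi : μ i ≠ some s := fun h => by rw [h] at hpref; exact lt_irrefl _ hpref
    rcases hcase with ⟨j, hjs, hwlt⟩ | hlt
    · -- displace j
      have hij : j ≠ i := fun h => by subst h; exact lt_irrefl _ hwlt
      have hblt : P.btw s j < P.btw s i := by
        rcases lt_trichotomy (P.btw s j) (P.btw s i) with h | h | h
        · exact h
        · exact absurd (hstrict s h) hij
        · exact absurd (P.refines s i j h) (not_lt.mpr hwlt.le)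
      set ν := Function.update (Function.update μ j none) i (some s) with hν
      have hνi : ν i = some s := Function.update_self _ _ _
      have hνj : ν j = none := by
        rw [hν, Function.update_of_ne hij, Function.update_self]
      have hνk : ∀ k, k ≠ i → k ≠ j → ν k = μ k := fun k hki hkj => by
        rw [hν, Function.update_of_ne hki, Function.update_of_ne hkj]
      apply hbtw {i}
      refine ⟨ν, ?_, ?_, ?_, ⟨i, rfl, by rwa [hνi]⟩⟩
      · intro t
        rcases eq_or_ne t s with rfl | hts
        · have hsub : {k | ν k = some t} ⊆ insert i ({k | μ k = some t} \ {j}) := by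
            intro k hk
            simp only [Set.mem_setOf_eq] at hk
            rcases eq_or_ne k i with rfl | hki
            · exact Set.mem_insert _ _
            · rcases eq_or_ne k j with rfl | hkj
              · rw [hνj] at hk; exact absurd hk (by simp)
              · rw [hνk k hki hkj] at hk
                exact Set.mem_insert_of_mem _ ⟨hk, hkj⟩
          refine le_trans (Set.ncard_le_ncard hsub (Set.toFinite _)) ?_
          refine le_trans (Set.ncard_insert_le _ _) ?_
          have hjmem : j ∈ {k | μ k = some t} := hjs
          rw [Set.ncard_diff_singleton_add_one hjmem (Set.toFinite _)]
          exact hμ t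
        · refine le_trans (Set.ncard_le_ncard ?_ (Set.toFinite _)) (hμ t)
          intro k hk
          simp only [Set.mem_setOf_eq] at hk ⊢
          rcases eq_or_ne k i with rfl | hki
          · rw [hνi] at hk
            exact absurd (Option.some_injective _ hk) (Ne.symm hts)
          · rcases eq_or_ne k j with rfl | hkj
            · rw [hνj] at hk; exact absurd hk (by simp)
            · rwa [hνk k hki hkj] at hk
      · rintro k hk t hkt
        cases hk
        rw [hνi] at hkt
        cases hkt
        exact Or.inl ⟨j, hjs, hblt⟩
      · rintro k hk
        cases hk
        rw [hνi]
        exact hpref.le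
    · -- empty seat
      set ν := Function.update μ i (some s) with hν
      have hνi : ν i = some s := Function.update_self _ _ _
      apply hbtw {i}
      refine ⟨ν, ?_, ?_, ?_, ⟨i, rfl, by rwa [hνi]⟩⟩
      · intro t
        rcases eq_or_ne t s with rfl | hts
        · have hsub : {k | ν k = some t} ⊆ insert i {k | μ k = some t} := by
            intro k hk
            simp only [Set.mem_setOf_eq] at hk
            rcases eq_or_ne k i with rfl | hki
            · exact Set.mem_insert _ _
            · rw [hν, Function.update_of_ne hki] at hk
              exact Set.mem_insert_of_mem _ hk
          refine le_trans (Set.ncard_le_ncard hsub (Set.toFinite _)) ?_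
          exact le_trans (Set.ncard_insert_le _ _) hlt
        · refine le_trans (Set.ncard_le_ncard ?_ (Set.toFinite _)) (hμ t)
          intro k hk
          simp only [Set.mem_setOf_eq] at hk ⊢
          rcases eq_or_ne k i with rfl | hki
          · rw [hνi] at hk
            exact absurd (Option.some_injective _ hk) (Ne.symm hts)
          · rwa [hν, Function.update_of_ne hki] at hk
      · rintro k hk t hkt
        cases hk
        rw [hνi] at hkt
        cases hkt
        exact Or.inr hlt
      · rintro k hk
        cases hk
        rw [hνi]
        exact hpref.le
  · rintro ⟨hIR, hFair⟩
    constructor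
    · rintro A ⟨ν, hνm, henf, hwk, i, hi, hstr⟩
      rcases hn : ν i with _ | s
      · rw [hn] at hstr
        exact absurd (lt_of_le_of_lt (hIR i) hstr) (lt_irrefl _)
      · rw [hn] at hstr
        rcases henf i hi s hn with ⟨j, hjs, hblt⟩ | hlt
        · exact hFair ⟨i, s, hstr, Or.inl ⟨j, hjs, P.refines s j i hblt⟩⟩
        · exact hFair ⟨i, s, hstr, Or.inr hlt⟩
    · rintro A ⟨ν, hνm, henf, hwk, i, hi, hstr⟩
      rcases hn : ν i with _ | s
      · rw [hn] at hstr
        exact absurd (lt_of_le_of_lt (hIR i) hstr) (lt_irrefl _)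
      · rw [hn] at hstr
        have hsim := (henf s ⟨i, hi, hn⟩).1
        have heq := setSim_eq_aux P s (hstrict s) _ _ hsim
        have him : i ∈ {j | ν j = some s} := hn
        rw [heq] at him
        rw [Set.mem_setOf_eq] at him
        rw [him] at hstr
        exact lt_irrefl _ hstr
end
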